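/- arXiv:math/0509109 — 7 statements merged into one kernel-verified Lean document; each statement's English description precedes it below -/
import Mathlib

section
/- For the truncated logarithm function tlog, defined by tlog(x) = log(x) if |log(x)| < 1 and tlog(x) = sign(log(x)) otherwise, there exists a constant C > 0 such that for all x ≥ 0: (1/C)·(1 - √x)² ≤ x·tlog(x) + x·(tlog(x))² + 1 - x ≤ C·(1 - √x)². -/
/-!
Write `t = √x`. Where `|log x| < 1` the expression is `x log x + 1 - x` plus `x log² x`. The
first term lies between `(1 - t)²` (from `log t ≥ 1 - 1/t`) and `(x - 1)² = (1 + t)² (1 - t)²`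
(from `log x ≤ x - 1`), and the second is `4 (t log t)² ≤ 4 max(t, 1)² (1 - t)²`; since `x < e`,
both are `O((1 - t)²)`. Elsewhere the expression is `x + 1` (for `x ≥ e`) or `1 - x` (for
`x ≤ 1/e`), and `t` stays away from `1`, so these compare with `(1 - t)²` as well.
-/

open Real

noncomputable def tlog (x : ℝ) : ℝ :=
  if |Real.log x| < 1 then Real.log x else if 1 ≤ Real.log x then 1 else -1

theorem tlog_cases (x : ℝ) :
    (|log x| < 1 ∧ tlog x = log x) ∨ (1 ≤ log x ∧ tlog x = 1) ∨ (log x ≤ -1 ∧ tlog x = -1) := by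
  unfold tlog
  split_ifs with h₁ h₂
  · exact Or.inl ⟨h₁, rfl⟩
  · exact Or.inr (Or.inl ⟨h₂, rfl⟩)
  · refine Or.inr (Or.inr ⟨?_, rfl⟩)
    cases abs_cases (log x) <;> linarith

theorem two_le_of_one_le_log {x : ℝ} (hx : 0 ≤ x) (h : 1 ≤ log x) : 2 ≤ x := by
  rcases hx.eq_or_lt with rfl | hx
  · norm_num at h
  linarith [(le_log_iff_exp_le hx).1 h, add_one_le_exp 1]

theorem le_half_of_log_le_neg_one {x : ℝ} (h : log x ≤ -1) : x ≤ 1 / 2 := by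
  rcases le_or_gt x 0 with hx | hx
  · linarith
  have hx_le := (log_le_iff_le_exp hx).1 h
  rw [exp_neg] at hx_le
  have := inv_anti₀ two_pos (by linarith [add_one_le_exp 1] : (2 : ℝ) ≤ exp 1)
  linarith

theorem lt_three_of_log_lt_one {x : ℝ} (h : log x < 1) : x < 3 := by
  rcases le_or_gt x 0 with hx | hx
  · linarith
  linarith [(log_lt_iff_lt_exp hx).1 h, exp_one_lt_three]

theorem sq_one_sub_sqrt_le_mul_log_add_one_sub {x : ℝ} (hx : 0 ≤ x) :
    (1 - √x) ^ 2 ≤ x * log x + 1 - x := by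
  obtain ⟨t, ht, rfl⟩ : ∃ t, 0 ≤ t ∧ x = t ^ 2 := ⟨√x, sqrt_nonneg _, (sq_sqrt hx).symm⟩
  rw [sqrt_sq ht, log_pow]
  rcases ht.eq_or_lt with rfl | ht
  · simp
  have h := mul_le_mul_of_nonneg_left (one_sub_inv_le_log_of_pos ht) ht.le
  rw [mul_sub, mul_one, mul_inv_cancel₀ ht.ne'] at h
  push_cast
  nlinarith

theorem mul_log_add_one_sub_le_sq {x : ℝ} (hx : 0 ≤ x) : x * log x + 1 - x ≤ (x - 1) ^ 2 := by
  rcases hx.eq_or_lt with rfl | hx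
  · simp
  nlinarith [mul_le_mul_of_nonneg_left (log_le_sub_one_of_pos hx) hx.le]

theorem abs_mul_log_le {t : ℝ} (ht : 0 ≤ t) : |t * log t| ≤ max t 1 * |t - 1| := by
  rcases le_total 1 t with h1 | h1
  · rw [max_eq_left h1, abs_of_nonneg (mul_nonneg ht (log_nonneg h1)),
      abs_of_nonneg (by linarith)]
    exact mul_le_mul_of_nonneg_left (log_le_sub_one_of_pos (by linarith)) ht
  · rw [max_eq_right h1, abs_of_nonpos (mul_nonpos_of_nonneg_of_nonpos ht (log_nonpos ht h1)),
      abs_of_nonpos (by linarith), one_mul]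
    rcases ht.eq_or_lt with rfl | ht
    · simp
    have h := mul_le_mul_of_nonneg_left (one_sub_inv_le_log_of_pos ht) ht.le
    rw [mul_sub, mul_one, mul_inv_cancel₀ ht.ne'] at h
    linarith

theorem mul_sq_log_le {x : ℝ} (hx : 0 ≤ x) (hx4 : x ≤ 4) :
    x * log x ^ 2 ≤ 16 * (1 - √x) ^ 2 := by
  obtain ⟨t, ht, rfl⟩ : ∃ t, 0 ≤ t ∧ x = t ^ 2 := ⟨√x, sqrt_nonneg _, (sq_sqrt hx).symm⟩
  rw [sqrt_sq ht, log_pow]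
  have hmax : max t 1 ≤ 2 := max_le (by nlinarith) one_le_two
  calc t ^ 2 * ((2 : ℕ) * log t) ^ 2 = 4 * |t * log t| ^ 2 := by push_cast; rw [sq_abs]; ring
    _ ≤ 4 * (max t 1 * |t - 1|) ^ 2 := by gcongr; exact abs_mul_log_le ht
    _ ≤ 4 * (2 * |t - 1|) ^ 2 := by gcongr
    _ = 16 * (1 - t) ^ 2 := by rw [mul_pow, sq_abs]; ring

theorem sq_one_sub_sqrt_le_tlog {x : ℝ} (hx : 0 ≤ x) :
    (1 - √x) ^ 2 ≤ x * tlog x + x * tlog x ^ 2 + 1 - x := by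
  have hsq := sq_sqrt hx
  rcases tlog_cases x with ⟨-, e⟩ | ⟨-, e⟩ | ⟨h, e⟩ <;> rw [e]
  · linarith [sq_one_sub_sqrt_le_mul_log_add_one_sub hx, mul_nonneg hx (sq_nonneg (log x))]
  · nlinarith [sqrt_nonneg x]
  · have := le_half_of_log_le_neg_one h
    nlinarith [sqrt_nonneg x]

theorem tlog_le_sq_one_sub_sqrt {x : ℝ} (hx : 0 ≤ x) :
    x * tlog x + x * tlog x ^ 2 + 1 - x ≤ 25 * (1 - √x) ^ 2 := by
  have ht := sqrt_nonneg x
  have hsq := sq_sqrt hx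
  rcases tlog_cases x with ⟨h, e⟩ | ⟨h, e⟩ | ⟨h, e⟩ <;> rw [e]
  · have hx3 := lt_three_of_log_lt_one (abs_lt.1 h).2
    have ht2 : √x ≤ 2 := by nlinarith
    have hsub : (x - 1) ^ 2 ≤ 9 * (1 - √x) ^ 2 := by
      nlinarith [mul_nonneg (sq_nonneg (1 - √x)) (by linarith : 0 ≤ 2 - √x)]
    linarith [mul_log_add_one_sub_le_sq hx, mul_sq_log_le hx (by linarith)]
  · have hx2 := two_le_of_one_le_log hx h
    have : 1.4 ≤ √x := by nlinarith
    nlinarith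
  · have hx2 := le_half_of_log_le_neg_one h
    have : √x ≤ 3 / 4 := by nlinarith
    nlinarith

/-- There is a constant `C > 0` such that for all `x ≥ 0`,
`(1/C)(1-√x)² ≤ x·tlog x + x·(tlog x)² + 1 - x ≤ C(1-√x)²`. -/
theorem stmt0 :
    ∃ C : ℝ, 0 < C ∧ ∀ x : ℝ, 0 ≤ x →
      (1 / C) * (1 - Real.sqrt x) ^ 2 ≤ x * tlog x + x * (tlog x) ^ 2 + 1 - x ∧
      x * tlog x + x * (tlog x) ^ 2 + 1 - x ≤ C * (1 - Real.sqrt x) ^ 2 := by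
  refine ⟨25, by norm_num, fun x hx => ⟨?_, tlog_le_sq_one_sub_sqrt hx⟩⟩
  calc 1 / 25 * (1 - √x) ^ 2 ≤ (1 - √x) ^ 2 := by linarith [sq_nonneg (1 - √x)]
    _ ≤ _ := sq_one_sub_sqrt_le_tlog hx
end

section
/- Let S be a countable set and p, q probability mass functions on S that are both weighted averages (mixtures) of a family {r_y : y ∈ Y} of probability mass functions on S, i.e., p = Σ_y a(y) r_y and q = Σ_y b(y) r_y for probability weights a, b on a countable index set Y. Then the squared Hellinger distance between p and q is at most the supremum over pairs (y, y') of the squared Hellinger distance between r_y and r_{y'}. -/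
/-!
The Hellinger affinity `∑ √p √q` of two mixtures dominates the corresponding mixture of
the pairwise affinities: by Cauchy–Schwarz, `∑_y a y √(r y σ) ≤ √(p σ)`, so
`√(p σ) √(q σ) ≥ ∑_{y,y'} a y b y' √(r y σ) √(r y' σ)`, and summing over `σ` gives
`∑ √p √q ≥ ∑_{y,y'} a y b y' ∑ √(r y) √(r y')`. Since `ρ²_H = 2 (1 - ∑ √p √q)` for
probability mass functions, a lower bound on the pairwise affinities is inherited by `p, q`.
-/

open Finset Filter Topology

noncomputable section

variable {S Y : Type*}

def hellingerAffinity (f g : S → ℝ) : ℝ := ∑' σ, √(f σ) * √(g σ)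

def mixture (c : Y → ℝ) (r : Y → S → ℝ) (σ : S) : ℝ := ∑' y, c y * r y σ

lemma sqrt_mul_sqrt_le_add_div_two {x y : ℝ} (hx : 0 ≤ x) (hy : 0 ≤ y) :
    √x * √y ≤ (x + y) / 2 := by
  nlinarith [sq_nonneg (√x - √y), Real.sq_sqrt hx, Real.sq_sqrt hy]

section Affinity

variable {f g : S → ℝ}

lemma summable_sqrt_mul_sqrt (hf0 : 0 ≤ f) (hg0 : 0 ≤ g) (hf : Summable f) (hg : Summable g) :
    Summable fun σ ↦ √(f σ) * √(g σ) :=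
  .of_nonneg_of_le (fun _ ↦ by positivity)
    (fun σ ↦ sqrt_mul_sqrt_le_add_div_two (hf0 σ) (hg0 σ)) ((hf.add hg).div_const 2)

lemma tsum_sub_sqrt_sq {m n : ℝ} (hf0 : 0 ≤ f) (hg0 : 0 ≤ g) (hf : HasSum f m)
    (hg : HasSum g n) :
    ∑' σ, (√(f σ) - √(g σ)) ^ 2 = m + n - 2 * hellingerAffinity f g := by
  have hfg := summable_sqrt_mul_sqrt hf0 hg0 hf.summable hg.summable
  have hsq : ∀ σ, (√(f σ) - √(g σ)) ^ 2 = f σ + g σ - 2 * (√(f σ) * √(g σ)) := fun σ ↦ by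
    nlinarith [Real.sq_sqrt (hf0 σ), Real.sq_sqrt (hg0 σ)]
  simp_rw [hsq, hellingerAffinity]
  exact ((hf.add hg).sub (hfg.hasSum.mul_left 2)).tsum_eq

end Affinity

section Mixture

variable {c a b : Y → ℝ} {r : Y → S → ℝ}

lemma mixture_nonneg (hc0 : 0 ≤ c) (hr0 : ∀ y, 0 ≤ r y) : 0 ≤ mixture c r :=
  fun σ ↦ tsum_nonneg fun y ↦ mul_nonneg (hc0 y) (hr0 y σ)

variable (hr0 : ∀ y, 0 ≤ r y) (hr : ∀ y, HasSum (r y) 1)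
include hr0 hr

lemma summable_mixture_uncurry (hc0 : 0 ≤ c) (hc : Summable c) :
    Summable fun z : Y × S ↦ c z.1 * r z.1 z.2 :=
  (summable_prod_of_nonneg fun z ↦ mul_nonneg (hc0 _) (hr0 _ _)).2
    ⟨fun y ↦ ((hr y).mul_left (c y)).summable,
      by simpa [tsum_mul_left, (hr _).tsum_eq] using hc⟩

lemma hasSum_mixture_apply (hc0 : 0 ≤ c) (hc : Summable c) (σ : S) :
    HasSum (fun y ↦ c y * r y σ) (mixture c r σ) :=
  ((summable_mixture_uncurry hr0 hr hc0 hc).prod_symm.prod_factor σ).hasSum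

lemma hasSum_mixture {m : ℝ} (hc0 : 0 ≤ c) (hc : HasSum c m) : HasSum (mixture c r) m := by
  have hsum := summable_mixture_uncurry hr0 hr hc0 hc.summable
  have hfib : HasSum c (∑' z : Y × S, c z.1 * r z.1 z.2) :=
    hsum.hasSum.prod_fiberwise fun y ↦ by simpa using (hr y).mul_left (c y)
  rw [hc.unique hfib]
  exact ((Equiv.prodComm S Y).hasSum_iff.2 hsum.hasSum).prod_fiberwise
    (hasSum_mixture_apply hr0 hr hc0 hc.summable)

lemma sum_mul_sqrt_le_sqrt_mixture (hc0 : 0 ≤ c) (hc : HasSum c 1) (σ : S) (F : Finset Y) :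
    ∑ y ∈ F, c y * √(r y σ) ≤ √(mixture c r σ) :=
  calc ∑ y ∈ F, c y * √(r y σ) = ∑ y ∈ F, √(c y) * √(c y * r y σ) :=
        sum_congr rfl fun y _ ↦ by
          rw [Real.sqrt_mul (hc0 y), ← mul_assoc, Real.mul_self_sqrt (hc0 y)]
    _ ≤ √(∑ y ∈ F, c y) * √(∑ y ∈ F, c y * r y σ) :=
        Real.sum_sqrt_mul_sqrt_le F hc0 fun y ↦ mul_nonneg (hc0 y) (hr0 y σ)
    _ ≤ √1 * √(mixture c r σ) := by
        gcongr
        · exact sum_le_hasSum F (fun y _ ↦ hc0 y) hc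
        · exact sum_le_hasSum F (fun y _ ↦ mul_nonneg (hc0 y) (hr0 y σ))
            (hasSum_mixture_apply hr0 hr hc0 hc.summable σ)
    _ = √(mixture c r σ) := by rw [Real.sqrt_one, one_mul]

variable (ha0 : 0 ≤ a) (ha : HasSum a 1) (hb0 : 0 ≤ b) (hb : HasSum b 1)
include ha0 ha hb0 hb

/-- Bounding partial sums over `F × F` and passing to the limit in `F` avoids interchanging
infinite sums over `Y × Y × S`. -/
lemma sum_sum_mul_hellingerAffinity_le (F : Finset Y) :
    ∑ y ∈ F, ∑ y' ∈ F, a y * b y' * hellingerAffinity (r y) (r y') ≤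
      hellingerAffinity (mixture a r) (mixture b r) := by
  have hrr : ∀ y y', Summable fun σ ↦ √(r y σ) * √(r y' σ) := fun y y' ↦
    summable_sqrt_mul_sqrt (hr0 y) (hr0 y') (hr y).summable (hr y').summable
  calc ∑ y ∈ F, ∑ y' ∈ F, a y * b y' * hellingerAffinity (r y) (r y')
      = ∑' σ, ∑ y ∈ F, ∑ y' ∈ F, a y * b y' * (√(r y σ) * √(r y' σ)) := by
        simp only [hellingerAffinity, ← tsum_mul_left]
        rw [Summable.tsum_finsetSum fun y _ ↦ summable_sum fun y' _ ↦ (hrr y y').mul_left _]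
        exact sum_congr rfl fun y _ ↦
          (Summable.tsum_finsetSum fun y' _ ↦ (hrr y y').mul_left _).symm
    _ ≤ ∑' σ, √(mixture a r σ) * √(mixture b r σ) := by
        refine Summable.tsum_le_tsum (fun σ ↦ ?_)
          (summable_sum fun y _ ↦ summable_sum fun y' _ ↦ (hrr y y').mul_left _)
          (summable_sqrt_mul_sqrt (mixture_nonneg ha0 hr0) (mixture_nonneg hb0 hr0)
            (hasSum_mixture hr0 hr ha0 ha).summable (hasSum_mixture hr0 hr hb0 hb).summable)
        calc ∑ y ∈ F, ∑ y' ∈ F, a y * b y' * (√(r y σ) * √(r y' σ))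
            = (∑ y ∈ F, a y * √(r y σ)) * ∑ y' ∈ F, b y' * √(r y' σ) := by
              rw [sum_mul_sum]; simp only [mul_mul_mul_comm]
          _ ≤ √(mixture a r σ) * √(mixture b r σ) :=
              mul_le_mul (sum_mul_sqrt_le_sqrt_mixture hr0 hr ha0 ha σ F)
                (sum_mul_sqrt_le_sqrt_mixture hr0 hr hb0 hb σ F)
                (sum_nonneg fun y _ ↦ mul_nonneg (hb0 y) (Real.sqrt_nonneg _))
                (Real.sqrt_nonneg _)

lemma le_hellingerAffinity_mixture {L : ℝ}
    (hL : ∀ y y', L ≤ hellingerAffinity (r y) (r y')) :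
    L ≤ hellingerAffinity (mixture a r) (mixture b r) := by
  have hlim : Tendsto (fun F : Finset Y ↦ L * ((∑ y ∈ F, a y) * ∑ y ∈ F, b y)) atTop
      (𝓝 (L * (1 * 1))) :=
    (Tendsto.mul ha hb).const_mul L
  refine le_of_tendsto' (by simpa using hlim) fun F ↦ ?_
  calc L * ((∑ y ∈ F, a y) * ∑ y ∈ F, b y) = ∑ y ∈ F, ∑ y' ∈ F, a y * b y' * L := by
        rw [mul_comm L, sum_mul_sum]; simp only [sum_mul]
    _ ≤ ∑ y ∈ F, ∑ y' ∈ F, a y * b y' * hellingerAffinity (r y) (r y') := by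
        gcongr with y _ y' _
        · exact mul_nonneg (ha0 y) (hb0 y')
        · exact hL y y'
    _ ≤ _ := sum_sum_mul_hellingerAffinity_le hr0 hr ha0 ha hb0 hb F

end Mixture

end

theorem stmt4_general {S Y : Type*}
    (r : Y → S → ℝ) (a b : Y → ℝ)
    (hr0 : ∀ y σ, 0 ≤ r y σ) (hrs : ∀ y, Summable (r y)) (hr1 : ∀ y, ∑' σ, r y σ = 1)
    (ha0 : ∀ y, 0 ≤ a y) (hb0 : ∀ y, 0 ≤ b y)
    (has : Summable a) (hbs : Summable b)
    (ha1 : ∑' y, a y = 1) (hb1 : ∑' y, b y = 1)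
    (p q : S → ℝ)
    (hp : ∀ σ, p σ = ∑' y, a y * r y σ) (hq : ∀ σ, q σ = ∑' y, b y * r y σ)
    (C : ℝ)
    (hC : ∀ y y' : Y, ∑' σ, (Real.sqrt (r y σ) - Real.sqrt (r y' σ)) ^ 2 ≤ C) :
    ∑' σ, (Real.sqrt (p σ) - Real.sqrt (q σ)) ^ 2 ≤ C := by
  have hr y : HasSum (r y) 1 := (hrs y).hasSum_iff.2 (hr1 y)
  have ha : HasSum a 1 := has.hasSum_iff.2 ha1
  have hb : HasSum b 1 := hbs.hasSum_iff.2 hb1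
  obtain rfl : p = mixture a r := funext hp
  obtain rfl : q = mixture b r := funext hq
  have hpair y y' : 1 - C / 2 ≤ hellingerAffinity (r y) (r y') := by
    have := hC y y'
    rw [tsum_sub_sqrt_sq (hr0 y) (hr0 y') (hr y) (hr y')] at this
    linarith
  rw [tsum_sub_sqrt_sq (mixture_nonneg ha0 hr0) (mixture_nonneg hb0 hr0)
    (hasSum_mixture hr0 hr ha0 ha) (hasSum_mixture hr0 hr hb0 hb)]
  linarith [le_hellingerAffinity_mixture hr0 hr ha0 ha hb0 hb hpair]

/-- If `p` and `q` are mixtures `p = Σ_y a(y) r_y`, `q = Σ_y b(y) r_y` of a family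
of probability mass functions `r_y` on a countable set `S`, with probability weights
`a, b` on a countable set `Y`, then the squared Hellinger distance between `p` and `q`
is at most the supremum over pairs `(y, y')` of the squared Hellinger distance between
`r_y` and `r_{y'}` (formulated as: any upper bound for the pairwise squared Hellinger
distances is an upper bound for `ρ²_H(p,q)`). -/
theorem stmt4 {S Y : Type*} [Countable S] [Countable Y]
    (r : Y → S → ℝ) (a b : Y → ℝ)
    (hr0 : ∀ y σ, 0 ≤ r y σ) (hrs : ∀ y, Summable (r y)) (hr1 : ∀ y, ∑' σ, r y σ = 1)
    (ha0 : ∀ y, 0 ≤ a y) (hb0 : ∀ y, 0 ≤ b y)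
    (has : Summable a) (hbs : Summable b)
    (ha1 : ∑' y, a y = 1) (hb1 : ∑' y, b y = 1)
    (p q : S → ℝ)
    (hp : ∀ σ, p σ = ∑' y, a y * r y σ) (hq : ∀ σ, q σ = ∑' y, b y * r y σ)
    (C : ℝ)
    (hC : ∀ y y' : Y, ∑' σ, (Real.sqrt (r y σ) - Real.sqrt (r y' σ)) ^ 2 ≤ C) :
    ∑' σ, (Real.sqrt (p σ) - Real.sqrt (q σ)) ^ 2 ≤ C :=
  stmt4_general r a b hr0 hrs hr1 ha0 hb0 has hbs ha1 hb1 p q hp hq C hC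
end

section
/- Let μ̃ be locally absolutely continuous with respect to μ relative to a filtration (𝓕ₙ) generating 𝓕, and let Zₙ be the likelihood ratio process with Z_∞ = limsup Zₙ. Then for every B ∈ 𝓕: μ̃(B) = ∫_B Z_∞ dμ + μ̃(B ∩ {Z_∞ = ∞}). In particular, μ̃ ≪ μ if and only if μ̃(Z_∞ < ∞) = 1. -/
open MeasureTheory Filter Topology

/-- The Radon–Nikodym derivative of trimmed measures is a conditional expectation
(in `toReal` form). -/
lemma aux_trim_rnDeriv_ae_eq_condexp {X : Type*} {m : MeasurableSpace X}
    {m0 : MeasurableSpace X}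
    (ν ρ : Measure X) [IsFiniteMeasure ν] [IsFiniteMeasure ρ] (hνρ : ν ≪ ρ)
    (hm : m ≤ m0) :
    (fun x => ((ν.trim hm).rnDeriv (ρ.trim hm) x).toReal)
      =ᵐ[ρ] ρ[fun x => (ν.rnDeriv ρ x).toReal | m] := by
  have hmeas : StronglyMeasurable[m] fun x => ((ν.trim hm).rnDeriv (ρ.trim hm) x).toReal :=
    (Measure.measurable_rnDeriv _ _).ennreal_toReal.stronglyMeasurable
  have hint_trim : Integrable (fun x => ((ν.trim hm).rnDeriv (ρ.trim hm) x).toReal)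
      (ρ.trim hm) := Measure.integrable_toReal_rnDeriv
  have hint : Integrable (fun x => ((ν.trim hm).rnDeriv (ρ.trim hm) x).toReal) ρ :=
    integrable_of_integrable_trim hm hint_trim
  refine ae_eq_condExp_of_forall_setIntegral_eq hm Measure.integrable_toReal_rnDeriv
    (fun s _ _ => hint.integrableOn) (fun s hs _ => ?_) hmeas.aestronglyMeasurable
  rw [setIntegral_trim hm hmeas hs, Measure.setIntegral_toReal_rnDeriv (hνρ.trim hm) s,
    Measure.setIntegral_toReal_rnDeriv hνρ s, measureReal_def, measureReal_def,
    trim_measurableSet_eq hm hs]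

/-- Lebesgue-type decomposition under local absolute continuity: if `μ̃ ⋘ μ` along a
filtration `(𝓕ₙ)` generating `𝓕`, and `Z_∞ = limsup Zₙ` of the likelihood ratio process,
then `μ̃(B) = ∫_B Z_∞ dμ + μ̃(B ∩ {Z_∞ = ∞})` for all `B ∈ 𝓕`; in particular
`μ̃ ≪ μ ↔ μ̃(Z_∞ < ∞) = 1`. -/
theorem stmt7 {X : Type*} {m0 : MeasurableSpace X}
    (μ μt : Measure X) [IsProbabilityMeasure μ] [IsProbabilityMeasure μt]
    (ℱ : Filtration ℕ m0)
    (hgen : (⨆ n, (ℱ n : MeasurableSpace X)) = m0)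
    (hloc : ∀ n, μt.trim (ℱ.le n) ≪ μ.trim (ℱ.le n))
    (Zinf : X → ENNReal)
    (hZinf : Zinf = fun x =>
      Filter.limsup (fun n => (μt.trim (ℱ.le n)).rnDeriv (μ.trim (ℱ.le n)) x) atTop) :
    (∀ B : Set X, MeasurableSet B →
        μt B = ∫⁻ x in B, Zinf x ∂μ + μt (B ∩ {x | Zinf x = ⊤})) ∧
      (μt ≪ μ ↔ μt {x | Zinf x < ⊤} = 1) := by
  set ρ : Measure X := μ + μt with hρ
  have hμρ : μ ≪ ρ := by
    refine Measure.AbsolutelyContinuous.mk fun s _ hs => ?_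
    rw [hρ, Measure.add_apply] at hs
    exact (add_eq_zero.mp hs).1
  have hμtρ : μt ≪ ρ := by
    refine Measure.AbsolutelyContinuous.mk fun s _ hs => ?_
    rw [hρ, Measure.add_apply] at hs
    exact (add_eq_zero.mp hs).2
  set f : X → ENNReal := μ.rnDeriv ρ with hf
  set g : X → ENNReal := μt.rnDeriv ρ with hg
  set fn : ℕ → X → ENNReal := fun n => (μ.trim (ℱ.le n)).rnDeriv (ρ.trim (ℱ.le n)) with hfn
  set gn : ℕ → X → ENNReal := fun n => (μt.trim (ℱ.le n)).rnDeriv (ρ.trim (ℱ.le n)) with hgn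
  set Zn : ℕ → X → ENNReal := fun n => (μt.trim (ℱ.le n)).rnDeriv (μ.trim (ℱ.le n)) with hZn
  -- Lévy upward convergence for fn and gn
  have hfmeas_sup : StronglyMeasurable[⨆ n, (ℱ n : MeasurableSpace X)]
      fun x => (f x).toReal := by
    rw [hgen]; exact (Measure.measurable_rnDeriv _ _).ennreal_toReal.stronglyMeasurable
  have hgmeas_sup : StronglyMeasurable[⨆ n, (ℱ n : MeasurableSpace X)]
      fun x => (g x).toReal := by
    rw [hgen]; exact (Measure.measurable_rnDeriv _ _).ennreal_toReal.stronglyMeasurable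
  have htendf : ∀ᵐ x ∂ρ, Tendsto (fun n => (fn n x).toReal) atTop (𝓝 (f x).toReal) := by
    have h1 : ∀ᵐ x ∂ρ, Tendsto (fun n => (ρ[fun x => (f x).toReal|ℱ n]) x) atTop
        (𝓝 (f x).toReal) :=
      Integrable.tendsto_ae_condExp Measure.integrable_toReal_rnDeriv hfmeas_sup
    have h2 : ∀ᵐ x ∂ρ, ∀ n, (fn n x).toReal = (ρ[fun x => (f x).toReal|ℱ n]) x :=
      ae_all_iff.2 fun n => aux_trim_rnDeriv_ae_eq_condexp μ ρ hμρ (ℱ.le n)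
    filter_upwards [h1, h2] with x h1 h2
    exact h1.congr fun n => (h2 n).symm
  have htendg : ∀ᵐ x ∂ρ, Tendsto (fun n => (gn n x).toReal) atTop (𝓝 (g x).toReal) := by
    have h1 : ∀ᵐ x ∂ρ, Tendsto (fun n => (ρ[fun x => (g x).toReal|ℱ n]) x) atTop
        (𝓝 (g x).toReal) :=
      Integrable.tendsto_ae_condExp Measure.integrable_toReal_rnDeriv hgmeas_sup
    have h2 : ∀ᵐ x ∂ρ, ∀ n, (gn n x).toReal = (ρ[fun x => (g x).toReal|ℱ n]) x :=
      ae_all_iff.2 fun n => aux_trim_rnDeriv_ae_eq_condexp μt ρ hμtρ (ℱ.le n)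
    filter_upwards [h1, h2] with x h1 h2
    exact h1.congr fun n => (h2 n).symm
  -- algebraic identities
  have hZfg : ∀ᵐ x ∂ρ, ∀ n, Zn n x * fn n x = gn n x := by
    refine ae_all_iff.2 fun n => ?_
    have h := Measure.rnDeriv_mul_rnDeriv (μ := μt.trim (ℱ.le n)) (ν := μ.trim (ℱ.le n))
      (κ := ρ.trim (ℱ.le n)) (hloc n)
    exact (ae_eq_of_ae_eq_trim h).mono fun x hx => hx
  have hsum_n : ∀ᵐ x ∂ρ, ∀ n, fn n x + gn n x = 1 := by
    refine ae_all_iff.2 fun n => ?_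
    have hadd : ρ.trim (ℱ.le n) = μ.trim (ℱ.le n) + μt.trim (ℱ.le n) := trim_add _
    have h := Measure.rnDeriv_add' (μ.trim (ℱ.le n)) (μt.trim (ℱ.le n)) (ρ.trim (ℱ.le n))
    rw [← hadd] at h
    have h2 := Measure.rnDeriv_self (ρ.trim (ℱ.le n))
    exact (ae_eq_of_ae_eq_trim (h.symm.trans h2)).mono fun x hx => hx
  have hsum : ∀ᵐ x ∂ρ, f x + g x = 1 := by
    have hadd : ρ = μ + μt := hρ
    have h := Measure.rnDeriv_add' μ μt ρ
    rw [← hadd] at h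
    have h2 := Measure.rnDeriv_self ρ
    exact (h.symm.trans h2).mono fun x hx => hx
  -- the main pointwise claim
  have hmain : ∀ᵐ x ∂ρ, Zinf x = g x / f x ∧ (Zinf x = ⊤ ↔ f x = 0) := by
    filter_upwards [htendf, htendg, hZfg, hsum_n, hsum] with x hfx hgx hZ hn hx1
    have ffin : ∀ n, fn n x ≠ ⊤ := fun n =>
      (lt_of_le_of_lt (le_trans le_self_add (hn n).le) ENNReal.one_lt_top).ne
    have gfin : ∀ n, gn n x ≠ ⊤ := fun n =>
      (lt_of_le_of_lt (le_trans le_add_self (hn n).le) ENNReal.one_lt_top).ne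
    have ftop : f x ≠ ⊤ := (lt_of_le_of_lt (le_trans le_self_add hx1.le) ENNReal.one_lt_top).ne
    have gtop : g x ≠ ⊤ := (lt_of_le_of_lt (le_trans le_add_self hx1.le) ENNReal.one_lt_top).ne
    have htf : Tendsto (fun n => fn n x) atTop (𝓝 (f x)) := by
      have h1 := ENNReal.tendsto_ofReal hfx
      rw [ENNReal.ofReal_toReal ftop] at h1
      exact h1.congr fun n => ENNReal.ofReal_toReal (ffin n)
    have htg : Tendsto (fun n => gn n x) atTop (𝓝 (g x)) := by
      have h1 := ENNReal.tendsto_ofReal hgx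
      rw [ENNReal.ofReal_toReal gtop] at h1
      exact h1.congr fun n => ENNReal.ofReal_toReal (gfin n)
    have hg1 : f x = 0 → g x = 1 := fun h0 => by simpa [h0] using hx1
    have hev : ∀ᶠ n in atTop, fn n x ≠ 0 := by
      by_cases hf0 : f x = 0
      · have : ∀ᶠ n in atTop, gn n x ≠ 0 := htg.eventually_ne (by rw [hg1 hf0]; exact one_ne_zero)
        refine this.mono fun n hgn0 hfn0 => hgn0 ?_
        rw [← hZ n, hfn0, mul_zero]
      · exact htf.eventually_ne hf0
    have hZeq : ∀ᶠ n in atTop, Zn n x = gn n x / fn n x :=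
      hev.mono fun n h0 =>
        (ENNReal.eq_div_iff h0 (ffin n)).2 (by rw [mul_comm]; exact hZ n)
    have hor : g x ≠ 0 ∨ f x ≠ 0 := by
      by_cases hf0 : f x = 0
      · exact Or.inl (by rw [hg1 hf0]; exact one_ne_zero)
      · exact Or.inr hf0
    have htZ : Tendsto (fun n => Zn n x) atTop (𝓝 (g x / f x)) :=
      (ENNReal.Tendsto.div htg hor htf (Or.inl ftop)).congr'
        (hZeq.mono fun n h => h.symm)
    have hZeq' : Zinf x = g x / f x := by rw [hZinf]; exact htZ.limsup_eq
    refine ⟨hZeq', ?_⟩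
    rw [hZeq']
    constructor
    · intro htop
      by_contra hf0
      exact absurd htop (ENNReal.div_lt_top gtop hf0).ne
    · intro hf0
      rw [hf0, hg1 hf0]
      simp
  have hmainμ : ∀ᵐ x ∂μ, Zinf x = g x / f x ∧ (Zinf x = ⊤ ↔ f x = 0) :=
    hmain.filter_mono hμρ.ae_le
  have hmainμt : ∀ᵐ x ∂μt, Zinf x = g x / f x ∧ (Zinf x = ⊤ ↔ f x = 0) :=
    hmain.filter_mono hμtρ.ae_le
  have hS : MeasurableSet {x | f x = 0} :=
    Measure.measurable_rnDeriv μ ρ (measurableSet_singleton 0)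
  have hSc : {x | f x ≠ 0} = {x | f x = 0}ᶜ := by ext x; simp
  have hSne : MeasurableSet {x | f x ≠ 0} := by rw [hSc]; exact hS.compl
  -- the singular set identification
  have hsets : ∀ B : Set X, (B ∩ {x | Zinf x = ⊤} : Set X) =ᵐ[μt] (B ∩ {x | f x = 0} : Set X) :=
    fun B => hmainμt.mono fun x hx => by
      simp only [Set.mem_inter_iff, Set.mem_setOf_eq, eq_iff_iff]
      exact and_congr_right fun _ => hx.2
  -- Part 1
  have part1 : ∀ B : Set X, MeasurableSet B →
      μt B = ∫⁻ x in B, Zinf x ∂μ + μt (B ∩ {x | Zinf x = ⊤}) := by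
    intro B hB
    have stepA : ∫⁻ x in B, Zinf x ∂μ = μt (B ∩ {x | f x ≠ 0}) := by
      have hμeq : ρ.withDensity f = μ := Measure.withDensity_rnDeriv_eq μ ρ hμρ
      have hfin : ∀ᵐ x ∂ρ, f x ≠ ⊤ := Measure.rnDeriv_ne_top μ ρ
      calc ∫⁻ x in B, Zinf x ∂μ
          = ∫⁻ x in B, g x / f x ∂μ := by
            refine lintegral_congr_ae (ae_restrict_of_ae ?_)
            exact hmainμ.mono fun x hx => hx.1
        _ = ∫⁻ x in B, g x / f x ∂(ρ.withDensity f) := by rw [hμeq]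
        _ = ∫⁻ x in B, f x * (g x / f x) ∂ρ := by
            rw [restrict_withDensity hB, lintegral_withDensity_eq_lintegral_mul _
              (Measure.measurable_rnDeriv _ _) (g := fun x => g x / f x)
              (((Measure.measurable_rnDeriv _ _).div (Measure.measurable_rnDeriv _ _) :
                Measurable fun x => g x / f x))]
            rfl
        _ = ∫⁻ x in B, ({x | f x ≠ 0}.indicator g) x ∂ρ := by
            refine lintegral_congr_ae (ae_restrict_of_ae ?_)
            filter_upwards [hfin] with x hx
            by_cases h0 : f x = 0
            · simp [h0, Set.indicator_of_notMem, Set.mem_setOf_eq]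
            · rw [ENNReal.mul_div_cancel h0 hx]
              simp [Set.indicator, h0]
        _ = ∫⁻ x in {x | f x ≠ 0} ∩ B, g x ∂ρ := by
            rw [lintegral_indicator hSne, Measure.restrict_restrict hSne]
        _ = μt ({x | f x ≠ 0} ∩ B) := Measure.setLIntegral_rnDeriv' hμtρ (hSne.inter hB)
        _ = μt (B ∩ {x | f x ≠ 0}) := by rw [Set.inter_comm]
    have stepB : μt (B ∩ {x | Zinf x = ⊤}) = μt (B ∩ {x | f x = 0}) :=
      measure_congr (hsets B)
    have stepC : μt (B ∩ {x | f x ≠ 0}) + μt (B ∩ {x | f x = 0}) = μt B := by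
      have h := measure_inter_add_diff (μ := μt) B hSne
      have hdiff : B \ {x | f x ≠ 0} = B ∩ {x | f x = 0} := by
        ext y; simp [Set.mem_diff, not_not]
      rwa [hdiff] at h
    rw [stepA, stepB, stepC]
  refine ⟨part1, ?_⟩
  have hZtop_f0 : μt {x | Zinf x = ⊤} = μt {x | f x = 0} := by
    have := hsets Set.univ
    simpa [Set.univ_inter] using measure_congr this
  have hZlt : μt {x | Zinf x < ⊤} = μt {x | f x ≠ 0} := by
    refine measure_congr (hmainμt.mono fun x hx => ?_)
    simp only [Set.mem_setOf_eq, eq_iff_iff, lt_top_iff_ne_top]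
    exact not_congr hx.2
  constructor
  · intro hac
    have hf0 : μ {x | f x = 0} = 0 := by
      have h1 : μ {x | f x = 0} = ∫⁻ x in {x | f x = 0}, f x ∂ρ :=
        (Measure.setLIntegral_rnDeriv' hμρ hS).symm
      rw [h1, setLIntegral_congr_fun hS (g := fun _ => 0) (fun x hx => hx), lintegral_zero]
    have hμt0 : μt {x | f x = 0} = 0 := hac hf0
    rw [hZlt, hSc, prob_compl_eq_one_sub hS, hμt0, tsub_zero]
  · intro h1
    have hμtne : μt {x | f x ≠ 0} = 1 := by rw [← hZlt]; exact h1
    have hμt0 : μt {x | f x = 0} = 0 := by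
      have h := prob_compl_eq_one_sub (μ := μt) hSne
      rw [hμtne, tsub_self, hSc, compl_compl] at h
      exact h
    refine Measure.AbsolutelyContinuous.mk fun B hB hμB => ?_
    have h2 : ∫⁻ x in B, Zinf x ∂μ = 0 := by
      rw [Measure.restrict_eq_zero.mpr hμB, lintegral_zero_measure]
    have h3 : μt (B ∩ {x | Zinf x = ⊤}) = 0 := by
      refine le_antisymm (le_trans (measure_mono Set.inter_subset_right) ?_) zero_le
      rw [hZtop_f0, hμt0]
    rw [part1 B hB, h2, h3, zero_add]
end

section
/- Let (𝓕ₙ) be a filtration where each 𝓕ₙ is generated by a countable partition refining that of 𝓕_{n-1}, and let μ, μ̃ be probability measures with μ̃ locally absolutely continuous with respect to μ. Then the Hellinger process increment d_n(x) = ∫(1 - √α_n)² dμ(·|𝓕_{n-1})(x) equals the squared Kakutani–Hellinger distance Σ_{[y] ∈ Sₙ(x)} (√p_n(y) - √p̃_n(y))², where Sₙ(x) is the set of 𝓕ₙ-atoms contained in the 𝓕_{n-1}-atom of x, and p_n, p̃_n are the conditional probabilities of these atoms under μ and μ̃ respectively. -/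
open MeasureTheory Filter
open scoped ENNReal

lemma sqrt_sub_sq_le (x y : ℝ) (hx : 0 ≤ x) (hy : 0 ≤ y) :
    (Real.sqrt x - Real.sqrt y) ^ 2 ≤ x + y := by
  nlinarith [Real.sq_sqrt hx, Real.sq_sqrt hy, Real.sqrt_nonneg x, Real.sqrt_nonneg y,
    mul_nonneg (Real.sqrt_nonneg x) (Real.sqrt_nonneg y)]

lemma key_aux (a b ta bt : ℝ≥0∞) (ha : a ≠ ∞) (hat : ta ≠ ∞)
    (hba : b ≤ a) (hbt : bt ≤ ta) (hb0 : b = 0 → bt = 0) :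
    b.toReal * (1 - Real.sqrt ((bt / ta).toReal / (b / a).toReal)) ^ 2
      = a.toReal * (Real.sqrt ((b / a).toReal) - Real.sqrt ((bt / ta).toReal)) ^ 2 := by
  by_cases hb : b = 0
  · simp [hb, hb0 hb, ENNReal.zero_div]
  · have ha0 : a ≠ 0 := fun h => hb (le_antisymm (h ▸ hba) (zero_le))
    have hbfin : b ≠ ∞ := ne_top_of_le_ne_top ha hba
    have hbtfin : bt ≠ ∞ := ne_top_of_le_ne_top hat hbt
    have hapos : 0 < a.toReal := ENNReal.toReal_pos ha0 ha
    have hbpos : 0 < b.toReal := ENNReal.toReal_pos hb hbfin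
    have hp : (b / a).toReal = b.toReal / a.toReal := ENNReal.toReal_div b a
    have hppos : 0 < (b / a).toReal := by rw [hp]; positivity
    by_cases hat0 : ta = 0
    · have hbt0 : bt = 0 := le_antisymm (hat0 ▸ hbt) (zero_le)
      have h0 : (bt / ta).toReal = 0 := by simp [hbt0]
      rw [h0, hp, zero_div, Real.sqrt_zero, sub_zero, sub_zero, one_pow, mul_one,
        Real.sq_sqrt (by positivity : (0:ℝ) ≤ b.toReal / a.toReal)]
      field_simp
    · have hq : (bt / ta).toReal = bt.toReal / ta.toReal := ENNReal.toReal_div bt ta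
      have hqnn : 0 ≤ (bt / ta).toReal := ENNReal.toReal_nonneg
      set q := (bt / ta).toReal with hqdef
      set P := (b / a).toReal with hPdef
      have hsq : Real.sqrt (q / P) = Real.sqrt q / Real.sqrt P := Real.sqrt_div hqnn P
      rw [hsq]
      have hsP : 0 < Real.sqrt P := Real.sqrt_pos.mpr hppos
      have hsP2 : Real.sqrt P ^ 2 = P := Real.sq_sqrt hppos.le
      have hb_eq : b.toReal = P * a.toReal := by
        rw [hp]; field_simp
      rw [hb_eq]
      field_simp
      nlinarith [hsP2, hsP, Real.sqrt_nonneg q]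

/-- For a filtration generated by successively refining countable partitions (the atom of
`x` at level `n` being `{y | ∀ k ≤ n, f k y = f k x}` for countable-valued functions
`f k`), with conditional atom probabilities `pₙ, p̃ₙ` under `μ, μ̃` and `αₙ = p̃ₙ/pₙ`,
the Hellinger increment `dₙ(x) = E_μ[(1-√αₙ)²|𝓕ₙ₋₁](x)` equals (a.e.) the squared
Kakutani–Hellinger distance `Σ_{[y]∈Sₙ(x)} (√pₙ(y) - √p̃ₙ(y))²` over the 𝓕ₙ-atoms
contained in the 𝓕ₙ₋₁-atom of `x`. -/
theorem stmt9 {X : Type*} {m0 : MeasurableSpace X}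
    (μ μt : Measure X) [IsProbabilityMeasure μ] [IsProbabilityMeasure μt]
    (f : ℕ → X → ℕ)
    (ℱ : Filtration ℕ m0)
    (hℱ : ∀ n, (ℱ n : MeasurableSpace X) =
      ⨆ k ∈ Finset.range (n + 1), MeasurableSpace.comap (f k) ⊤)
    (hloc : ∀ n, μt.trim (ℱ.le n) ≪ μ.trim (ℱ.le n))
    (atom : ℕ → X → Set X)
    (hatom : ∀ n x, atom n x = {y | ∀ k ≤ n, f k y = f k x})
    (p pt : ℕ → X → ℝ)
    (hp : ∀ n x, p (n + 1) x = (μ (atom (n + 1) x) / μ (atom n x)).toReal)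
    (hpt : ∀ n x, pt (n + 1) x = (μt (atom (n + 1) x) / μt (atom n x)).toReal)
    (α : ℕ → X → ℝ) (hα : ∀ n x, α (n + 1) x = pt (n + 1) x / p (n + 1) x) :
    ∀ n : ℕ, ∀ᵐ x ∂μ,
      (μ[fun y => (1 - Real.sqrt (α (n + 1) y)) ^ 2 | ℱ n]) x =
        ∑' i : ℕ,
          (Real.sqrt ((μ ({y | (∀ k ≤ n, f k y = f k x) ∧ f (n + 1) y = i})
                / μ (atom n x)).toReal) -
           Real.sqrt ((μt ({y | (∀ k ≤ n, f k y = f k x) ∧ f (n + 1) y = i})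
                / μt (atom n x)).toReal)) ^ 2 := by
  intro n
  classical
  -- measurability of the coordinate functions
  have hmf : ∀ k, Measurable (f k) := by
    intro k
    refine measurable_iff_comap_le.mpr (le_trans ?_ (ℱ.le k))
    rw [hℱ k]
    exact le_iSup₂ (f := fun j (_ : j ∈ Finset.range (k + 1)) => MeasurableSpace.comap (f j) ⊤)
      k (Finset.mem_range.mpr (Nat.lt_succ_of_le le_rfl))
  set F : X → (Fin (n + 1) → ℕ) := fun x k => f k x with hFdef
  set A : (Fin (n + 1) → ℕ) → Set X := fun c => F ⁻¹' {c} with hAdef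
  set B : (Fin (n + 1) → ℕ) → ℕ → Set X := fun c i => A c ∩ (f (n + 1)) ⁻¹' {i} with hBdef
  have hFmeas : Measurable F := measurable_pi_lambda _ (fun k => hmf k)
  have hAmeas : ∀ c, MeasurableSet (A c) := fun c => hFmeas (measurableSet_singleton c)
  have hBmeas : ∀ c i, MeasurableSet (B c i) :=
    fun c i => (hAmeas c).inter (hmf (n + 1) (measurableSet_singleton i))
  -- the forall-iff bridge
  have hFiff : ∀ x y : X, (∀ k ≤ n, f k y = f k x) ↔ F y = F x := by
    intro x y
    rw [funext_iff]
    constructor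
    · exact fun h k => h k (Nat.lt_succ_iff.mp k.2)
    · exact fun h k hk => h ⟨k, Nat.lt_succ_of_le hk⟩
  have hatomA : ∀ x, atom n x = A (F x) := by
    intro x
    rw [hatom]
    ext y
    exact hFiff x y
  have hatomB : ∀ x, atom (n + 1) x = B (F x) (f (n + 1) x) := by
    intro x
    rw [hatom]
    ext y
    simp only [Set.mem_setOf_eq, hBdef, hAdef, Set.mem_inter_iff, Set.mem_preimage,
      Set.mem_singleton_iff]
    rw [← hFiff x y]
    constructor
    · intro h
      exact ⟨fun k hk => h k (hk.trans (Nat.le_succ n)), h (n + 1) le_rfl⟩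
    · rintro ⟨h1, h2⟩ k hk
      rcases Nat.lt_succ_iff_lt_or_eq.mp (Nat.lt_succ_of_le hk) with h | h
      · exact h1 k (Nat.lt_succ_iff.mp h)
      · subst h; exact h2
  -- sigma-algebra identification
  have hF_le : MeasurableSpace.comap F ⊤ ≤ ℱ n := by
    intro s hs
    obtain ⟨T, -, rfl⟩ := hs
    have hAF : ∀ c : Fin (n + 1) → ℕ, MeasurableSet[ℱ n] (F ⁻¹' {c}) := by
      intro c
      have hrw : F ⁻¹' {c} = ⋂ k : Fin (n + 1), (f k) ⁻¹' {(c k : ℕ)} := by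
        ext y
        simp [hFdef, funext_iff]
      rw [hrw]
      refine MeasurableSet.iInter fun k => ?_
      have hle : MeasurableSpace.comap (f k) ⊤ ≤ ℱ n := by
        rw [hℱ n]
        exact le_iSup₂ (f := fun j (_ : j ∈ Finset.range (n + 1)) => MeasurableSpace.comap (f j) ⊤)
          (k : ℕ) (Finset.mem_range.mpr k.2)
      exact hle _ ⟨{(c k : ℕ)}, trivial, rfl⟩
    have hrw : F ⁻¹' T = ⋃ c ∈ T, F ⁻¹' {c} := by
      rw [← Set.preimage_iUnion₂, Set.biUnion_of_singleton]
    rw [hrw]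
    exact MeasurableSet.biUnion T.to_countable fun c _ => hAF c
  have hle_F : (ℱ n : MeasurableSpace X) ≤ MeasurableSpace.comap F ⊤ := by
    rw [hℱ n]
    refine iSup_le fun k => iSup_le fun hk => ?_
    have hk' : k < n + 1 := Finset.mem_range.mp hk
    have : f k = (fun c : Fin (n + 1) → ℕ => c ⟨k, hk'⟩) ∘ F := rfl
    rw [this, ← MeasurableSpace.comap_comp]
    exact MeasurableSpace.comap_mono le_top
  have hFn_eq : (ℱ n : MeasurableSpace X) = MeasurableSpace.comap F ⊤ :=
    le_antisymm hle_F hF_le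
  have hFmeasn : Measurable[ℱ n] F :=
    measurable_iff_comap_le.mpr ((MeasurableSpace.comap_mono le_top).trans hF_le)
  -- measurability of atoms in the filtration
  have hAFn : ∀ c, MeasurableSet[ℱ n] (A c) := fun c => hF_le _ ⟨{c}, trivial, rfl⟩
  have hBFn : ∀ c i, MeasurableSet[ℱ (n + 1)] (B c i) := by
    intro c i
    refine MeasurableSet.inter (ℱ.mono (Nat.le_succ n) _ (hAFn c)) ?_
    have hle : MeasurableSpace.comap (f (n + 1)) ⊤ ≤ ℱ (n + 1) := by
      rw [hℱ (n + 1)]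
      exact le_iSup₂ (f := fun j (_ : j ∈ Finset.range (n + 2)) => MeasurableSpace.comap (f j) ⊤)
        (n + 1) (Finset.mem_range.mpr (Nat.lt_succ_of_le le_rfl))
    exact hle _ ⟨{i}, trivial, rfl⟩
  -- absolute continuity on atoms
  have habs : ∀ c i, μ (B c i) = 0 → μt (B c i) = 0 := by
    intro c i h0
    have h1 : μ.trim (ℱ.le (n + 1)) (B c i) = 0 := by
      rw [trim_measurableSet_eq _ (hBFn c i)]; exact h0
    have h2 := hloc (n + 1) h1
    rwa [trim_measurableSet_eq _ (hBFn c i)] at h2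
  -- basic measure facts
  have hμB_le : ∀ c i, μ (B c i) ≤ μ (A c) := fun c i => measure_mono Set.inter_subset_left
  have hμtB_le : ∀ c i, μt (B c i) ≤ μt (A c) := fun c i => measure_mono Set.inter_subset_left
  have hdisjB : ∀ c, Pairwise (Function.onFun Disjoint fun i => B c i) := by
    intro c i j hij
    refine Set.disjoint_left.mpr fun x hxi hxj => hij ?_
    have h1 : f (n + 1) x = i := hxi.2
    have h2 : f (n + 1) x = j := hxj.2
    rw [← h1, h2]
  have hUnionB : ∀ c, (⋃ i, B c i) = A c := by
    intro c
    ext x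
    simp only [Set.mem_iUnion, hBdef, Set.mem_inter_iff, Set.mem_preimage, Set.mem_singleton_iff]
    exact ⟨fun ⟨i, hi, _⟩ => hi, fun hx => ⟨f (n + 1) x, hx, rfl⟩⟩
  have hsumB : ∀ (ν : Measure X), ∀ c, ∑' i, ν (B c i) = ν (A c) := by
    intro ν c
    rw [← measure_iUnion (hdisjB c) (fun i => hBmeas c i), hUnionB c]
  -- the probability ratio functions
  set pr : (Fin (n + 1) → ℕ) → ℕ → ℝ := fun c i => ((μ (B c i)) / μ (A c)).toReal with hprdef
  set ptr : (Fin (n + 1) → ℕ) → ℕ → ℝ := fun c i => ((μt (B c i)) / μt (A c)).toReal with hptrdef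
  set φ : (Fin (n + 1) → ℕ) → ℕ → ℝ := fun c i => (1 - Real.sqrt (ptr c i / pr c i)) ^ 2 with hφdef
  set H : (Fin (n + 1) → ℕ) → ℝ := fun c => ∑' i, (Real.sqrt (pr c i) - Real.sqrt (ptr c i)) ^ 2
    with hHdef
  -- key pointwise identity
  have kR : ∀ c i, (μ (B c i)).toReal * φ c i
      = (μ (A c)).toReal * (Real.sqrt (pr c i) - Real.sqrt (ptr c i)) ^ 2 :=
    fun c i => key_aux (μ (A c)) (μ (B c i)) (μt (A c)) (μt (B c i))
      (measure_ne_top μ _) (measure_ne_top μt _) (hμB_le c i) (hμtB_le c i) (habs c i)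
  -- finiteness of ratios
  have hfinB : ∀ c i, μ (B c i) / μ (A c) ≠ ∞ := by
    intro c i
    by_cases hA : μ (A c) = 0
    · have : μ (B c i) = 0 := le_antisymm (hA ▸ hμB_le c i) (zero_le)
      simp [this]
    · exact (ENNReal.div_lt_top (measure_ne_top μ _) hA).ne
  have hfinBt : ∀ c i, μt (B c i) / μt (A c) ≠ ∞ := by
    intro c i
    by_cases hA : μt (A c) = 0
    · have : μt (B c i) = 0 := le_antisymm (hA ▸ hμtB_le c i) (zero_le)
      simp [this]
    · exact (ENNReal.div_lt_top (measure_ne_top μt _) hA).ne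
  -- ENNReal sums of ratios
  have hsum_ratio : ∀ c, ∑' i, μ (B c i) / μ (A c) ≤ 1 := by
    intro c
    have h1 : ∑' i, μ (B c i) / μ (A c) = (∑' i, μ (B c i)) / μ (A c) := by
      simp only [div_eq_mul_inv]
      exact ENNReal.tsum_mul_right
    rw [h1, hsumB μ c]
    exact ENNReal.div_self_le_one
  have hsum_ratiot : ∀ c, ∑' i, μt (B c i) / μt (A c) ≤ 1 := by
    intro c
    have h1 : ∑' i, μt (B c i) / μt (A c) = (∑' i, μt (B c i)) / μt (A c) := by
      simp only [div_eq_mul_inv]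
      exact ENNReal.tsum_mul_right
    rw [h1, hsumB μt c]
    exact ENNReal.div_self_le_one
  -- summability of real ratios
  have hsmp : ∀ c, Summable (pr c) := by
    intro c
    exact ENNReal.summable_toReal (((hsum_ratio c).trans_lt ENNReal.one_lt_top).ne)
  have hsmpt : ∀ c, Summable (ptr c) := by
    intro c
    exact ENNReal.summable_toReal (((hsum_ratiot c).trans_lt ENNReal.one_lt_top).ne)
  have hprsum_le : ∀ c, ∑' i, pr c i ≤ 1 := by
    intro c
    simp only [hprdef]
    rw [← ENNReal.tsum_toReal_eq (fun i => hfinB c i)]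
    have := ENNReal.toReal_mono (by simp) (hsum_ratio c)
    simpa using this
  have hptrsum_le : ∀ c, ∑' i, ptr c i ≤ 1 := by
    intro c
    simp only [hptrdef]
    rw [← ENNReal.tsum_toReal_eq (fun i => hfinBt c i)]
    have := ENNReal.toReal_mono (by simp) (hsum_ratiot c)
    simpa using this
  have hprnn : ∀ c i, 0 ≤ pr c i := fun c i => ENNReal.toReal_nonneg
  have hptrnn : ∀ c i, 0 ≤ ptr c i := fun c i => ENNReal.toReal_nonneg
  have hsummH : ∀ c, Summable (fun i => (Real.sqrt (pr c i) - Real.sqrt (ptr c i)) ^ 2) := by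
    intro c
    refine Summable.of_nonneg_of_le (fun i => sq_nonneg _)
      (fun i => sqrt_sub_sq_le _ _ (hprnn c i) (hptrnn c i)) ((hsmp c).add (hsmpt c))
  have hHnn : ∀ c, 0 ≤ H c := fun c => tsum_nonneg fun i => sq_nonneg _
  have hHle : ∀ c, H c ≤ 2 := by
    intro c
    calc H c ≤ ∑' i, (pr c i + ptr c i) :=
          Summable.tsum_le_tsum (fun i => sqrt_sub_sq_le _ _ (hprnn c i) (hptrnn c i)) (hsummH c)
            ((hsmp c).add (hsmpt c))
      _ = (∑' i, pr c i) + ∑' i, ptr c i := Summable.tsum_add (hsmp c) (hsmpt c)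
      _ ≤ 1 + 1 := add_le_add (hprsum_le c) (hptrsum_le c)
      _ = 2 := by norm_num
  -- the integrand g
  set g : X → ℝ := fun y => (1 - Real.sqrt (α (n + 1) y)) ^ 2 with hgdef
  have hmemB : ∀ x, x ∈ B (F x) (f (n + 1) x) := by
    intro x
    exact ⟨rfl, rfl⟩
  have hgy : ∀ c i, ∀ y ∈ B c i, g y = φ c i := by
    intro c i y hy
    have hFy : F y = c := hy.1
    have hfy : f (n + 1) y = i := hy.2
    have h1 : atom n y = A c := by rw [hatomA, hFy]
    have h2 : atom (n + 1) y = B c i := by rw [hatomB, hFy, hfy]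
    rw [hgdef]
    simp only [hα, hp, hpt, h1, h2, hφdef, hprdef, hptrdef]
  have hgF : ∀ x, g x = φ (F x) (f (n + 1) x) := fun x => hgy _ _ x (hmemB x)
  -- measurability of g
  have hφmeas : ∀ c, Measurable (φ c) := fun c => measurable_of_countable _
  have hgmeas : Measurable g := by
    have : g = (fun t : (Fin (n + 1) → ℕ) × ℕ => φ t.1 t.2) ∘ (fun x => (F x, f (n + 1) x)) := by
      funext x
      exact hgF x
    rw [this]
    exact (measurable_of_countable _).comp (hFmeas.prodMk (hmf (n + 1)))
  -- Integrability of g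
  have hgnn : ∀ x, 0 ≤ g x := fun x => sq_nonneg _
  have hφnn : ∀ c i, 0 ≤ φ c i := fun c i => sq_nonneg _
  have keyE : ∀ c i, ENNReal.ofReal (φ c i) * μ (B c i)
      = μ (A c) * ENNReal.ofReal ((Real.sqrt (pr c i) - Real.sqrt (ptr c i)) ^ 2) := by
    intro c i
    conv_lhs => rw [← ENNReal.ofReal_toReal (measure_ne_top μ (B c i))]
    conv_rhs => rw [← ENNReal.ofReal_toReal (measure_ne_top μ (A c))]
    rw [← ENNReal.ofReal_mul (hφnn c i), ← ENNReal.ofReal_mul ENNReal.toReal_nonneg]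
    rw [mul_comm (φ c i), kR c i]
  have hsumBound : ∀ c, ∑' i, ENNReal.ofReal ((Real.sqrt (pr c i) - Real.sqrt (ptr c i)) ^ 2)
      ≤ 2 := by
    intro c
    calc ∑' i, ENNReal.ofReal ((Real.sqrt (pr c i) - Real.sqrt (ptr c i)) ^ 2)
        ≤ ∑' i, (ENNReal.ofReal (pr c i) + ENNReal.ofReal (ptr c i)) := by
          refine ENNReal.tsum_le_tsum fun i => ?_
          refine le_trans (ENNReal.ofReal_le_ofReal
            (sqrt_sub_sq_le _ _ (hprnn c i) (hptrnn c i))) ?_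
          exact ENNReal.ofReal_add_le
      _ = (∑' i, ENNReal.ofReal (pr c i)) + ∑' i, ENNReal.ofReal (ptr c i) := ENNReal.tsum_add
      _ ≤ (∑' i, μ (B c i) / μ (A c)) + ∑' i, μt (B c i) / μt (A c) := by
          refine add_le_add (ENNReal.tsum_le_tsum fun i => ?_) (ENNReal.tsum_le_tsum fun i => ?_)
          · exact ENNReal.ofReal_toReal_le
          · exact ENNReal.ofReal_toReal_le
      _ ≤ 1 + 1 := add_le_add (hsum_ratio c) (hsum_ratiot c)
      _ = 2 := by norm_num
  have hdisjA : Pairwise (Function.onFun Disjoint A) := by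
    intro c d hcd
    refine Set.disjoint_left.mpr fun x hxc hxd => hcd ?_
    have h1 : F x = c := hxc
    have h2 : F x = d := hxd
    rw [← h1, h2]
  have hsumA : ∑' c, μ (A c) ≤ 1 := by
    refine le_trans (tsum_measure_le_measure_univ
      (fun c => (hAmeas c).nullMeasurableSet) ?_) ?_
    · exact fun c d hcd => ((hdisjA hcd).mono (le_refl _) (le_refl _)).aedisjoint
    · exact le_of_eq measure_univ
  have hgint : Integrable g μ := by
    refine ⟨hgmeas.aestronglyMeasurable, ?_⟩
    rw [hasFiniteIntegral_iff_ofReal (ae_of_all _ hgnn)]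
    set E : X → (Fin (n + 1) → ℕ) × ℕ := fun x => (F x, f (n + 1) x) with hEdef
    have hEmeas : Measurable E := hFmeas.prodMk (hmf (n + 1))
    have h1 : ∫⁻ x, ENNReal.ofReal (g x) ∂μ
        = ∫⁻ t, ENNReal.ofReal (φ t.1 t.2) ∂(μ.map E) := by
      rw [lintegral_map (measurable_of_countable _) hEmeas]
      exact lintegral_congr fun x => by rw [hgF x]
    have h2 : ∀ t : (Fin (n + 1) → ℕ) × ℕ, (μ.map E) {t} = μ (B t.1 t.2) := by
      intro t
      rw [Measure.map_apply hEmeas (measurableSet_singleton t)]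
      congr 1
      ext x
      simp only [Set.mem_preimage, Set.mem_singleton_iff, hEdef, Prod.ext_iff, hBdef, hAdef,
        Set.mem_inter_iff]
    calc ∫⁻ x, ENNReal.ofReal (g x) ∂μ
        = ∑' t : (Fin (n + 1) → ℕ) × ℕ, ENNReal.ofReal (φ t.1 t.2) * (μ.map E) {t} := by
          rw [h1, lintegral_countable']
      _ = ∑' t : (Fin (n + 1) → ℕ) × ℕ,
            μ (A t.1) * ENNReal.ofReal ((Real.sqrt (pr t.1 t.2) - Real.sqrt (ptr t.1 t.2)) ^ 2) := by
          refine tsum_congr fun t => ?_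
          rw [h2 t, keyE t.1 t.2]
      _ = ∑' c, ∑' i,
            μ (A c) * ENNReal.ofReal ((Real.sqrt (pr c i) - Real.sqrt (ptr c i)) ^ 2) :=
          ENNReal.tsum_prod (f := fun c i =>
            μ (A c) * ENNReal.ofReal ((Real.sqrt (pr c i) - Real.sqrt (ptr c i)) ^ 2))
      _ = ∑' c, μ (A c) * ∑' i,
            ENNReal.ofReal ((Real.sqrt (pr c i) - Real.sqrt (ptr c i)) ^ 2) :=
          tsum_congr fun c => ENNReal.tsum_mul_left
      _ ≤ ∑' c, μ (A c) * 2 :=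
          ENNReal.tsum_le_tsum fun c => mul_le_mul_right (hsumBound c) _
      _ = (∑' c, μ (A c)) * 2 := ENNReal.tsum_mul_right
      _ ≤ 1 * 2 := mul_le_mul_left hsumA _
      _ < ∞ := by norm_num
  -- the candidate function h
  have hHmeas : Measurable H := measurable_of_countable _
  have hhmeas : Measurable fun x => H (F x) := hHmeas.comp hFmeas
  have hhint : Integrable (fun x => H (F x)) μ := by
    refine ⟨hhmeas.aestronglyMeasurable, ?_⟩
    refine HasFiniteIntegral.of_bounded (C := 2) (ae_of_all _ fun x => ?_)
    rw [Real.norm_eq_abs, abs_of_nonneg (hHnn _)]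
    exact hHle _
  -- per-atom integral identity
  have hint_atom : ∀ c, ∫ x in A c, g x ∂μ = ∫ x in A c, H (F x) ∂μ := by
    intro c
    have hright : ∫ x in A c, H (F x) ∂μ = (μ (A c)).toReal * H c := by
      rw [setIntegral_congr_fun (hAmeas c) (g := fun _ => H c)
        (fun x hx => by rw [show F x = c from hx]), setIntegral_const, smul_eq_mul, measureReal_def]
    have hcong : ∫ x in A c, g x ∂μ = ∫ x in A c, φ c (f (n + 1) x) ∂μ :=
      setIntegral_congr_fun (hAmeas c) (fun x hx => hgy c (f (n + 1) x) x ⟨hx, rfl⟩)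
    have hIntOn : Integrable (fun x => φ c (f (n + 1) x)) (μ.restrict (A c)) := by
      refine (hgint.integrableOn (s := A c)).congr ?_
      refine (ae_restrict_iff' (hAmeas c)).mpr (ae_of_all _ fun x hx => ?_)
      exact hgy c (f (n + 1) x) x ⟨hx, rfl⟩
    have hmapint : Integrable (φ c) ((μ.restrict (A c)).map (f (n + 1))) := by
      rw [integrable_map_measure (measurable_of_countable _).aestronglyMeasurable
        (hmf (n + 1)).aemeasurable]
      exact hIntOn
    have hmapeq : ∫ x in A c, φ c (f (n + 1) x) ∂μ
        = ∫ i, φ c i ∂((μ.restrict (A c)).map (f (n + 1))) :=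
      (integral_map (hmf (n + 1)).aemeasurable
        (measurable_of_countable _).aestronglyMeasurable).symm
    have hsingle : ∀ i, ((μ.restrict (A c)).map (f (n + 1))) {i} = μ (B c i) := by
      intro i
      rw [Measure.map_apply (hmf (n + 1)) (measurableSet_singleton i),
        Measure.restrict_apply (hmf (n + 1) (measurableSet_singleton i)), Set.inter_comm]
    rw [hcong, hmapeq, integral_countable' hmapint, hright]
    calc ∑' i, (((μ.restrict (A c)).map (f (n + 1))) {i}).toReal • φ c i
        = ∑' i, (μ (A c)).toReal * (Real.sqrt (pr c i) - Real.sqrt (ptr c i)) ^ 2 := by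
          refine tsum_congr fun i => ?_
          rw [hsingle i, smul_eq_mul, kR c i]
      _ = (μ (A c)).toReal * H c := tsum_mul_left
  -- integral identity on all ℱ n-measurable sets
  have hg_eq : ∀ s : Set X, MeasurableSet[ℱ n] s →
      ∫ x in s, H (F x) ∂μ = ∫ x in s, g x ∂μ := by
    intro s hs
    rw [hFn_eq] at hs
    obtain ⟨T, -, rfl⟩ := hs
    have hsrep : F ⁻¹' T = ⋃ c : T, A (c : Fin (n + 1) → ℕ) := by
      ext x
      simp only [Set.mem_preimage, Set.mem_iUnion, hAdef, Set.mem_singleton_iff]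
      exact ⟨fun h => ⟨⟨F x, h⟩, rfl⟩, fun ⟨c, hc⟩ => hc ▸ c.2⟩
    have hdisjA : Pairwise (Function.onFun Disjoint fun c : T => A (c : Fin (n + 1) → ℕ)) := by
      intro c d hcd
      refine Set.disjoint_left.mpr fun x hxc hxd => hcd ?_
      have h1 : F x = (c : Fin (n + 1) → ℕ) := hxc
      have h2 : F x = (d : Fin (n + 1) → ℕ) := hxd
      exact Subtype.ext (h1 ▸ h2)
    rw [hsrep,
      integral_iUnion (fun c => hAmeas _) hdisjA (hhint.integrableOn),
      integral_iUnion (fun c => hAmeas _) hdisjA (hgint.integrableOn)]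
    exact tsum_congr fun c => (hint_atom _).symm
  -- conclude via uniqueness of conditional expectation
  have hmeas' : AEStronglyMeasurable[ℱ n] (fun x => H (F x)) μ :=
    StronglyMeasurable.aestronglyMeasurable
      ((hHmeas.comp hFmeasn).stronglyMeasurable)
  have hcond : (fun x => H (F x)) =ᵐ[μ] μ[g | ℱ n] :=
    ae_eq_condExp_of_forall_setIntegral_eq (ℱ.le n) hgint
      (fun s _ _ => hhint.integrableOn) (fun s hs _ => hg_eq s hs) hmeas'
  filter_upwards [hcond] with x hx
  rw [← hx]
  rw [hHdef]
  refine (tsum_congr fun i => ?_).symm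
  have hset : {y | (∀ k ≤ n, f k y = f k x) ∧ f (n + 1) y = i} = B (F x) i := by
    ext y
    simp only [Set.mem_setOf_eq, hBdef, hAdef, Set.mem_inter_iff, Set.mem_preimage,
      Set.mem_singleton_iff]
    rw [hFiff x y]
  rw [hset, hatomA, hprdef, hptrdef]
end

section
/- Let Y_n be a submartingale with respect to a probability measure ν and filtration (𝓕ₙ), with uniformly bounded increments |Y_n - Y_{n-1}| ≤ 1. Write the Doob decomposition Y_n = A_n + M_n with A_n predictable increasing and M_n a martingale. Then ν-almost surely, lim_n Y_n exists and is finite if and only if A_∞ = lim A_n < ∞ and Σ_n E[(Y_n - Y_{n-1})² | 𝓕_{n-1}] < ∞. -/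
open MeasureTheory Filter Set Topology
open scoped ENNReal NNReal

set_option linter.unusedSectionVars false
set_option maxHeartbeats 1000000

section Aux

variable {Ω : Type*} {m0 : MeasurableSpace Ω} {μ : Measure Ω} [IsProbabilityMeasure μ]
  {𝒢 : Filtration ℕ m0}

lemma aux_integral_mul_diff_eq_zero {f : ℕ → Ω → ℝ} (hf : Martingale f 𝒢 μ) (n : ℕ)
    {g : Ω → ℝ} (hg : StronglyMeasurable[𝒢 n] g) {C : ℝ}
    (hgb : ∀ᵐ ω ∂μ, |g ω| ≤ C) :
    ∫ ω, g ω * (f (n + 1) ω - f n ω) ∂μ = 0 := by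
  have hΔint : Integrable (fun ω => f (n + 1) ω - f n ω) μ :=
    (hf.integrable (n + 1)).sub (hf.integrable n)
  have hgm : AEStronglyMeasurable g μ := (hg.mono (𝒢.le n)).aestronglyMeasurable
  have hint : Integrable (fun ω => g ω * (f (n + 1) ω - f n ω)) μ :=
    hΔint.bdd_mul hgm (by simpa [Real.norm_eq_abs] using hgb)
  have hΔ0 : μ[fun ω => f (n + 1) ω - f n ω|𝒢 n] =ᵐ[μ] 0 := by
    have h1 : μ[fun ω => f (n + 1) ω - f n ω|𝒢 n]
        =ᵐ[μ] μ[f (n + 1)|𝒢 n] - μ[f n|𝒢 n] :=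
      condExp_sub (hf.integrable _) (hf.integrable _) _
    have h2 : μ[f (n + 1)|𝒢 n] =ᵐ[μ] f n := hf.condExp_ae_eq (Nat.le_succ n)
    have h3 : μ[f n|𝒢 n] = f n :=
      condExp_of_stronglyMeasurable (𝒢.le n) (hf.stronglyAdapted n) (hf.integrable n)
    filter_upwards [h1, h2] with ω e1 e2
    simp [e1, e2, h3]
  have hmul : μ[fun ω => g ω * (f (n + 1) ω - f n ω)|𝒢 n]
      =ᵐ[μ] fun ω => g ω * (μ[fun ω' => f (n + 1) ω' - f n ω'|𝒢 n]) ω := by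
    have := condExp_mul_of_stronglyMeasurable_left (m := 𝒢 n) hg
      (by simpa [Pi.mul_def] using hint) hΔint
    simpa [Pi.mul_def] using this
  rw [← integral_condExp (𝒢.le n)]
  rw [integral_congr_ae (hmul.trans ?_), integral_zero]
  filter_upwards [hΔ0] with ω e
  simp [e]


lemma aux_tendsto_of_sq_integral_bdd {f : ℕ → Ω → ℝ} (hf : Martingale f 𝒢 μ)
    (hfsq : ∀ n, Integrable (fun ω => f n ω ^ 2) μ) {K : ℝ}
    (hK : ∀ n, ∫ ω, f n ω ^ 2 ∂μ ≤ K) :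
    ∀ᵐ ω ∂μ, ∃ c, Tendsto (fun n => f n ω) atTop (𝓝 c) := by
  refine hf.submartingale.exists_ae_tendsto_of_bdd (R := (1 + K).toNNReal) fun n => ?_
  have h1 : ∫ ω, ‖f n ω‖ ∂μ ≤ 1 + K := by
    have h2 : ∫ ω, ‖f n ω‖ ∂μ ≤ ∫ ω, 1 + f n ω ^ 2 ∂μ := by
      refine integral_mono (hf.integrable n).norm ((integrable_const 1).add (hfsq n))
        fun ω => ?_
      simp only [Real.norm_eq_abs]
      nlinarith [abs_nonneg (f n ω), sq_abs (f n ω), sq_nonneg (|f n ω| - 1)]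
    rw [integral_add (integrable_const 1) (hfsq n), integral_const] at h2
    simp only [measure_univ, ENNReal.toReal_one, probReal_univ, smul_eq_mul, one_mul, mul_one] at h2
    linarith [hK n]
  have : eLpNorm (f n) 1 μ = ENNReal.ofReal (∫ ω, ‖f n ω‖ ∂μ) := by
    rw [eLpNorm_one_eq_lintegral_enorm, ofReal_integral_norm_eq_lintegral_enorm
      (hf.integrable n)]
  rw [this]
  exact (ENNReal.ofReal_le_ofReal h1).trans (le_of_eq rfl)

omit [IsProbabilityMeasure μ] in
lemma aux_growth {f : ℕ → Ω → ℝ} (hf0 : f 0 = 0)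
    (hbdd : ∀ᵐ ω ∂μ, ∀ n, |f (n + 1) ω - f n ω| ≤ 2) :
    ∀ᵐ ω ∂μ, ∀ n, |f n ω| ≤ 2 * n := by
  filter_upwards [hbdd] with ω h
  intro n
  induction n with
  | zero => simp [congrFun hf0 ω]
  | succ n ih =>
      have := h n
      push_cast
      have : |f (n + 1) ω| ≤ |f n ω| + 2 := by
        have := abs_sub_abs_le_abs_sub (f (n + 1) ω) (f n ω)
        linarith [h n]
      push_cast at ih ⊢
      linarith

lemma aux_condExp_diff_zero {f : ℕ → Ω → ℝ} (hf : Martingale f 𝒢 μ) (n : ℕ) :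
    μ[fun ω => f (n + 1) ω - f n ω|𝒢 n] =ᵐ[μ] 0 := by
  have h1 : μ[fun ω => f (n + 1) ω - f n ω|𝒢 n]
      =ᵐ[μ] μ[f (n + 1)|𝒢 n] - μ[f n|𝒢 n] :=
    condExp_sub (hf.integrable _) (hf.integrable _) _
  have h2 : μ[f (n + 1)|𝒢 n] =ᵐ[μ] f n := hf.condExp_ae_eq (Nat.le_succ n)
  have h3 : μ[f n|𝒢 n] = f n :=
    condExp_of_stronglyMeasurable (𝒢.le n) (hf.stronglyAdapted n) (hf.integrable n)
  filter_upwards [h1, h2] with ω e1 e2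
  simp [e1, e2, h3]


lemma aux_tendsto_of_summable {f : ℕ → Ω → ℝ} (hf : Martingale f 𝒢 μ) (hf0 : f 0 = 0)
    (hbdd : ∀ᵐ ω ∂μ, ∀ n, |f (n + 1) ω - f n ω| ≤ 2) :
    ∀ᵐ ω ∂μ, Summable (fun n => (μ[fun ω' => (f (n + 1) ω' - f n ω') ^ 2|𝒢 n]) ω) →
      ∃ L, Tendsto (fun n => f n ω) atTop (𝓝 L) := by
  set c : ℕ → Ω → ℝ := fun n => μ[fun ω' => (f (n + 1) ω' - f n ω') ^ 2|𝒢 n] with hcdef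
  have hc_sm : ∀ n, StronglyMeasurable[𝒢 n] (c n) := fun n => stronglyMeasurable_condExp
  have hc_nonneg : ∀ n, 0 ≤ᵐ[μ] c n := fun n =>
    condExp_nonneg (Eventually.of_forall fun ω => sq_nonneg _)
  have hc_int : ∀ n, Integrable (c n) μ := fun n => integrable_condExp
  have hΔ_int : ∀ n, Integrable (fun ω => f (n + 1) ω - f n ω) μ := fun n =>
    (hf.integrable (n + 1)).sub (hf.integrable n)
  have hΔsq_int : ∀ n, Integrable (fun ω => (f (n + 1) ω - f n ω) ^ 2) μ := by
    intro n
    refine Integrable.mono' (integrable_const 4) ?_ ?_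
    · simpa only [pow_two] using (hΔ_int n).1.fun_mul (hΔ_int n).1
    · filter_upwards [hbdd] with ω h
      rw [Real.norm_eq_abs, abs_pow]
      calc |f (n + 1) ω - f n ω| ^ 2 ≤ 2 ^ 2 := by
            exact pow_le_pow_left₀ (abs_nonneg _) (h n) 2
        _ = 4 := by norm_num
  have main : ∀ K : ℕ, ∀ᵐ ω ∂μ,
      (∀ n, ∑ k ∈ Finset.range (n + 1), c k ω ≤ K) →
        ∃ L, Tendsto (fun n => f n ω) atTop (𝓝 L) := by
    intro K
    set H : ℕ → Set Ω := fun n => {ω | ∑ k ∈ Finset.range (n + 1), c k ω ≤ K} with hHdef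
    have hH_meas : ∀ n, MeasurableSet[𝒢 n] (H n) := by
      intro n
      have hsm : StronglyMeasurable[𝒢 n] (fun ω => ∑ k ∈ Finset.range (n + 1), c k ω) :=
        Finset.stronglyMeasurable_fun_sum _ fun k hk =>
          (hc_sm k).mono (𝒢.mono (Nat.lt_succ_iff.mp (Finset.mem_range.mp hk)))
      exact measurableSet_le hsm.measurable measurable_const
    set g : ℕ → Ω → ℝ := fun n => (H n).indicator (fun _ => (1 : ℝ)) with hgdef
    have hg_sm : ∀ n, StronglyMeasurable[𝒢 n] (g n) := fun n =>
      stronglyMeasurable_const.indicator (hH_meas n)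
    have hg_nonneg : ∀ n ω, 0 ≤ g n ω := fun n ω =>
      Set.indicator_nonneg (fun _ _ => zero_le_one) ω
    have hg_le : ∀ n ω, g n ω ≤ 1 := fun n ω =>
      Set.indicator_le' (fun _ _ => le_refl 1) (fun _ _ => zero_le_one) ω
    have hg_abs : ∀ n ω, |g n ω| ≤ 1 := fun n ω =>
      abs_le.mpr ⟨by linarith [hg_nonneg n ω], hg_le n ω⟩
    set T : ℕ → Ω → ℝ := fun n ω =>
      ∑ k ∈ Finset.range n, g k ω * (f (k + 1) ω - f k ω) with hTdef
    have hT_sm : ∀ n, StronglyMeasurable[𝒢 n] (T n) := by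
      intro n
      refine Finset.stronglyMeasurable_fun_sum _ fun k hk => ?_
      have hk' := Finset.mem_range.mp hk
      exact ((hg_sm k).mono (𝒢.mono hk'.le)).mul
        (((hf.stronglyAdapted (k + 1)).mono (𝒢.mono hk')).sub ((hf.stronglyAdapted k).mono (𝒢.mono hk'.le)))
    have hT_bdd : ∀ᵐ ω ∂μ, ∀ n, |T n ω| ≤ 2 * n := by
      filter_upwards [hbdd] with ω h n
      calc |T n ω| ≤ ∑ k ∈ Finset.range n, |g k ω * (f (k + 1) ω - f k ω)| :=
            Finset.abs_sum_le_sum_abs _ _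
        _ ≤ ∑ _k ∈ Finset.range n, (2:ℝ) := by
            refine Finset.sum_le_sum fun k _ => ?_
            rw [abs_mul]
            calc |g k ω| * |f (k + 1) ω - f k ω| ≤ 1 * 2 :=
                  mul_le_mul (hg_abs k ω) (h k) (abs_nonneg _) zero_le_one
              _ = 2 := one_mul 2
        _ = 2 * n := by simp [mul_comm]
    have hT_int : ∀ n, Integrable (T n) μ := fun n =>
      Integrable.mono' (integrable_const (2 * (n:ℝ)))
        ((hT_sm n).mono (𝒢.le n)).aestronglyMeasurable
        (by filter_upwards [hT_bdd] with ω h using by simpa [Real.norm_eq_abs] using h n)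
    have hgΔ_int : ∀ n, Integrable (fun ω => g n ω * (f (n + 1) ω - f n ω)) μ := fun n =>
      (hΔ_int n).bdd_mul ((hg_sm n).mono (𝒢.le n)).aestronglyMeasurable
        (Eventually.of_forall fun ω => by simpa [Real.norm_eq_abs] using hg_abs n ω)
    have hT_succ : ∀ n, T (n + 1) = fun ω => T n ω + g n ω * (f (n + 1) ω - f n ω) :=
      fun n => funext fun ω => Finset.sum_range_succ _ n
    have hT_mart : Martingale T 𝒢 μ := by
      refine martingale_nat (fun n => hT_sm n) hT_int fun n => ?_
      have h1 : μ[T (n + 1)|𝒢 n] =ᵐ[μ]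
          μ[T n|𝒢 n] + μ[fun ω => g n ω * (f (n + 1) ω - f n ω)|𝒢 n] := by
        rw [hT_succ n]
        exact condExp_add (hT_int n) (hgΔ_int n) _
      have h2 : μ[T n|𝒢 n] = T n :=
        condExp_of_stronglyMeasurable (𝒢.le n) (hT_sm n) (hT_int n)
      have h3 : μ[fun ω => g n ω * (f (n + 1) ω - f n ω)|𝒢 n] =ᵐ[μ]
          fun ω => g n ω * (μ[fun ω' => f (n + 1) ω' - f n ω'|𝒢 n]) ω := by
        have := condExp_mul_of_stronglyMeasurable_left (hg_sm n)
          (by simpa [Pi.mul_def] using hgΔ_int n) (hΔ_int n)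
        simpa [Pi.mul_def] using this
      filter_upwards [h1, h3, aux_condExp_diff_zero hf n] with ω e1 e3 e0
      rw [e1, Pi.add_apply, h2, e3, e0]
      simp
    have key : ∀ n, ∫ ω, g n ω * (f (n + 1) ω - f n ω) ^ 2 ∂μ = ∫ ω, g n ω * c n ω ∂μ := by
      intro n
      have hmeq : ∀ h : Ω → ℝ, (fun ω => g n ω * h ω) = (H n).indicator h := by
        intro h; funext ω
        by_cases hω : ω ∈ H n <;> simp [hgdef, hω]
      rw [hmeq, hmeq, integral_indicator (𝒢.le n _ (hH_meas n)),
        integral_indicator (𝒢.le n _ (hH_meas n))]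
      exact (setIntegral_condExp (𝒢.le n) (hΔsq_int n) (hH_meas n)).symm
    have hgc_int : ∀ k, Integrable (fun ω => g k ω * c k ω) μ := fun k =>
      (hc_int k).bdd_mul ((hg_sm k).mono (𝒢.le k)).aestronglyMeasurable
        (Eventually.of_forall fun ω => by simpa [Real.norm_eq_abs] using hg_abs k ω)
    have hTsq_int : ∀ n, Integrable (fun ω => T n ω ^ 2) μ := by
      intro n
      refine Integrable.mono' (integrable_const ((2 * (n:ℝ)) ^ 2)) ?_ ?_
      · have hsm : AEStronglyMeasurable (T n) μ :=
          ((hT_sm n).mono (𝒢.le n)).aestronglyMeasurable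
        simpa only [pow_two] using hsm.fun_mul hsm
      · filter_upwards [hT_bdd] with ω h
        rw [Real.norm_eq_abs, abs_pow]
        exact pow_le_pow_left₀ (abs_nonneg _) (h n) 2
    have hmid_int : ∀ n, Integrable
        (fun ω => 2 * T n ω * g n ω * (f (n + 1) ω - f n ω)) μ := by
      intro n
      refine (hΔ_int n).bdd_mul (c := 2 * (2 * (n:ℝ))) ?_ ?_
      · exact ((stronglyMeasurable_const.mul (hT_sm n)).mul (hg_sm n)).mono (𝒢.le n)
          |>.aestronglyMeasurable
      · filter_upwards [hT_bdd] with ω h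
        rw [Real.norm_eq_abs, abs_mul, abs_mul, abs_two]
        calc 2 * |T n ω| * |g n ω| ≤ 2 * (2 * n) * 1 := by
              refine mul_le_mul (by nlinarith [h n]) (hg_abs n ω) (abs_nonneg _) (by positivity)
          _ = 2 * (2 * n) := mul_one _
    have hthird_int : ∀ n, Integrable (fun ω => g n ω * (f (n + 1) ω - f n ω) ^ 2) μ := by
      intro n
      refine (hΔsq_int n).bdd_mul ((hg_sm n).mono (𝒢.le n)).aestronglyMeasurable
        (Eventually.of_forall fun ω => by simpa [Real.norm_eq_abs] using hg_abs n ω)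
    have hmid_zero : ∀ n, ∫ ω, 2 * T n ω * g n ω * (f (n + 1) ω - f n ω) ∂μ = 0 := by
      intro n
      refine aux_integral_mul_diff_eq_zero hf n
        ((stronglyMeasurable_const.mul (hT_sm n)).mul (hg_sm n)) (C := 2 * (2 * n)) ?_
      filter_upwards [hT_bdd] with ω h
      rw [abs_mul, abs_mul, abs_two]
      calc 2 * |T n ω| * |g n ω| ≤ 2 * (2 * n) * 1 := by
            refine mul_le_mul (by nlinarith [h n]) (hg_abs n ω) (abs_nonneg _) (by positivity)
        _ = 2 * (2 * n) := mul_one _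
    have hTsq : ∀ n, ∫ ω, T n ω ^ 2 ∂μ = ∑ k ∈ Finset.range n, ∫ ω, g k ω * c k ω ∂μ := by
      intro n
      induction n with
      | zero => simp [hTdef]
      | succ n ih =>
          have hptwise : (fun ω => T (n + 1) ω ^ 2) = fun ω =>
              T n ω ^ 2 + 2 * T n ω * g n ω * (f (n + 1) ω - f n ω)
                + g n ω * (f (n + 1) ω - f n ω) ^ 2 := by
            funext ω
            rw [congrFun (hT_succ n) ω]
            have hgg : g n ω * g n ω = g n ω := by
              by_cases hω : ω ∈ H n <;> simp [hgdef, hω]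
            linear_combination (f (n + 1) ω - f n ω) ^ 2 * hgg
          have hsum_int : Integrable (fun ω => T n ω ^ 2
              + 2 * T n ω * g n ω * (f (n + 1) ω - f n ω)) μ :=
            (hTsq_int n).add (hmid_int n)
          rw [hptwise, integral_add hsum_int (hthird_int n),
            integral_add (hTsq_int n) (hmid_int n), ih, hmid_zero, key n,
            Finset.sum_range_succ, add_zero]
    have hptbound : ∀ᵐ ω ∂μ, ∀ n, ∑ k ∈ Finset.range n, g k ω * c k ω ≤ K := by
      filter_upwards [ae_all_iff.2 hc_nonneg] with ω hnn
      intro n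
      induction n with
      | zero => simp
      | succ n ih =>
          by_cases hω : ω ∈ H n
          · calc ∑ k ∈ Finset.range (n + 1), g k ω * c k ω
                ≤ ∑ k ∈ Finset.range (n + 1), c k ω := by
                  refine Finset.sum_le_sum fun k _ => ?_
                  exact mul_le_of_le_one_left (hnn k) (hg_le k ω)
              _ ≤ K := hω
          · rw [Finset.sum_range_succ]
            have : g n ω = 0 := Set.indicator_of_notMem hω _
            rw [this, zero_mul, add_zero]
            exact ih
    have hTK : ∀ n, ∫ ω, T n ω ^ 2 ∂μ ≤ K := by
      intro n
      rw [hTsq n, ← integral_finset_sum _ fun k _ => hgc_int k]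
      have h1 : ∫ ω, ∑ k ∈ Finset.range n, g k ω * c k ω ∂μ ≤ ∫ _ω, (K : ℝ) ∂μ := by
        refine integral_mono_ae (integrable_finset_sum _ fun k _ => hgc_int k)
          (integrable_const _) ?_
        filter_upwards [hptbound] with ω h using h n
      simpa using h1
    have hTconv := aux_tendsto_of_sq_integral_bdd hT_mart hTsq_int hTK
    filter_upwards [hTconv] with ω hω hCK
    obtain ⟨L, hL⟩ := hω
    refine ⟨L, ?_⟩
    have heq : ∀ n, f n ω = T n ω := by
      intro n
      have hgn : ∀ k, g k ω = 1 := fun k =>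
        Set.indicator_of_mem (show ω ∈ H k from hCK k) fun _ => (1:ℝ)
      simp only [hTdef, hgn, one_mul]
      rw [Finset.sum_range_sub (fun k => f k ω), congrFun hf0 ω, Pi.zero_apply, sub_zero]
    have : (fun n => f n ω) = fun n => T n ω := funext heq
    rw [this]
    exact hL
  filter_upwards [ae_all_iff.2 main, ae_all_iff.2 hc_nonneg] with ω hω hnn hsum
  refine hω ⌈∑' n, c n ω⌉₊ fun n => ?_
  calc ∑ k ∈ Finset.range (n + 1), c k ω ≤ ∑' k, c k ω :=
        Summable.sum_le_tsum _ (fun i _ => hnn i) hsum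
    _ ≤ ⌈∑' n, c n ω⌉₊ := Nat.le_ceil _


lemma aux_summable_of_tendsto {f : ℕ → Ω → ℝ} (hf : Martingale f 𝒢 μ) (hf0 : f 0 = 0)
    (hbdd : ∀ᵐ ω ∂μ, ∀ n, |f (n + 1) ω - f n ω| ≤ 2) :
    ∀ᵐ ω ∂μ, (∃ L, Tendsto (fun n => f n ω) atTop (𝓝 L)) →
      Summable (fun n => (μ[fun ω' => (f (n + 1) ω' - f n ω') ^ 2|𝒢 n]) ω) := by
  set c : ℕ → Ω → ℝ := fun n => μ[fun ω' => (f (n + 1) ω' - f n ω') ^ 2|𝒢 n] with hcdef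
  have hc_sm : ∀ n, StronglyMeasurable[𝒢 n] (c n) := fun n => stronglyMeasurable_condExp
  have hc_nonneg : ∀ n, 0 ≤ᵐ[μ] c n := fun n =>
    condExp_nonneg (Eventually.of_forall fun ω => sq_nonneg _)
  have hc_int : ∀ n, Integrable (c n) μ := fun n => integrable_condExp
  have hΔ_int : ∀ n, Integrable (fun ω => f (n + 1) ω - f n ω) μ := fun n =>
    (hf.integrable (n + 1)).sub (hf.integrable n)
  have hΔsq_int : ∀ n, Integrable (fun ω => (f (n + 1) ω - f n ω) ^ 2) μ := by
    intro n
    refine Integrable.mono' (integrable_const 4) ?_ ?_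
    · simpa only [pow_two] using (hΔ_int n).1.fun_mul (hΔ_int n).1
    · filter_upwards [hbdd] with ω h
      rw [Real.norm_eq_abs, abs_pow]
      calc |f (n + 1) ω - f n ω| ^ 2 ≤ 2 ^ 2 := pow_le_pow_left₀ (abs_nonneg _) (h n) 2
        _ = 4 := by norm_num
  have hfsq_int : ∀ n, Integrable (fun ω => f n ω ^ 2) μ := by
    intro n
    refine Integrable.mono' (integrable_const ((2 * (n : ℝ)) ^ 2)) ?_ ?_
    · have hsm : AEStronglyMeasurable (f n) μ := (hf.integrable n).1
      simpa only [pow_two] using hsm.fun_mul hsm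
    · filter_upwards [aux_growth hf0 hbdd] with ω h
      rw [Real.norm_eq_abs, abs_pow]
      exact pow_le_pow_left₀ (abs_nonneg _) (h n) 2
  have main : ∀ K : ℕ, ∀ᵐ ω ∂μ, (∀ n, |f n ω| ≤ K) → Summable fun n => c n ω := by
    intro K
    set G : ℕ → Set Ω := fun n => {ω | ∀ j ≤ n, |f j ω| ≤ K} with hGdef
    have hG_meas : ∀ n, MeasurableSet[𝒢 n] (G n) := by
      intro n
      have : G n = ⋂ j, ⋂ _ : j ≤ n, {ω | |f j ω| ≤ K} := by
        ext ω; simp [hGdef, Set.mem_iInter]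
      rw [this]
      refine MeasurableSet.iInter fun j => MeasurableSet.iInter fun hj => ?_
      have hsm : StronglyMeasurable[𝒢 n] fun ω => |f j ω| := by
        simpa only [Real.norm_eq_abs] using ((hf.stronglyAdapted j).mono (𝒢.mono hj)).norm
      exact measurableSet_le hsm.measurable measurable_const
    have hG_anti : ∀ n, G (n + 1) ⊆ G n := fun n ω h j hj => h j (hj.trans (Nat.le_succ n))
    set g : ℕ → Ω → ℝ := fun n => (G n).indicator (fun _ => (1 : ℝ)) with hgdef
    have hg_sm : ∀ n, StronglyMeasurable[𝒢 n] (g n) := fun n =>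
      stronglyMeasurable_const.indicator (hG_meas n)
    have hg_nonneg : ∀ n ω, 0 ≤ g n ω := fun n ω =>
      Set.indicator_nonneg (fun _ _ => zero_le_one) ω
    have hg_le : ∀ n ω, g n ω ≤ 1 := fun n ω =>
      Set.indicator_le' (fun _ _ => le_refl 1) (fun _ _ => zero_le_one) ω
    have hg_abs : ∀ n ω, |g n ω| ≤ 1 := fun n ω =>
      abs_le.mpr ⟨by linarith [hg_nonneg n ω], hg_le n ω⟩
    have hg_mem : ∀ n (ω : Ω), ω ∈ G n → g n ω = 1 := fun n ω h => by simp [hgdef, h]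
    have hg_not : ∀ n (ω : Ω), ω ∉ G n → g n ω = 0 := fun n ω h => by simp [hgdef, h]
    have hgf_bd : ∀ n ω, |g n ω * f n ω| ≤ K := by
      intro n ω
      by_cases hω : ω ∈ G n
      · rw [hg_mem n ω hω, one_mul]
        exact hω n le_rfl
      · rw [hg_not n ω hω, zero_mul, abs_zero]
        positivity
    -- key: ∫ g c = ∫ g (f(k+1)² - f k²)
    have hdiffsq_int : ∀ k, Integrable (fun ω => f (k + 1) ω ^ 2 - f k ω ^ 2) μ := fun k =>
      (hfsq_int (k + 1)).sub (hfsq_int k)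
    have hgd_int : ∀ k, Integrable (fun ω => g k ω * (f (k + 1) ω ^ 2 - f k ω ^ 2)) μ :=
      fun k => (hdiffsq_int k).bdd_mul ((hg_sm k).mono (𝒢.le k)).aestronglyMeasurable
        (Eventually.of_forall fun ω => by simpa [Real.norm_eq_abs] using hg_abs k ω)
    have hgΔsq_int : ∀ k, Integrable (fun ω => g k ω * (f (k + 1) ω - f k ω) ^ 2) μ :=
      fun k => (hΔsq_int k).bdd_mul ((hg_sm k).mono (𝒢.le k)).aestronglyMeasurable
        (Eventually.of_forall fun ω => by simpa [Real.norm_eq_abs] using hg_abs k ω)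
    have hmid_int : ∀ k, Integrable
        (fun ω => 2 * (g k ω * f k ω) * (f (k + 1) ω - f k ω)) μ := by
      intro k
      refine (hΔ_int k).bdd_mul (c := 2 * K) ?_ ?_
      · exact ((stronglyMeasurable_const.mul ((hg_sm k).mul ((hf.stronglyAdapted k)))).mono
          (𝒢.le k)).aestronglyMeasurable
      · refine Eventually.of_forall fun ω => ?_
        rw [Real.norm_eq_abs, abs_mul, abs_two]
        nlinarith [hgf_bd k ω, abs_nonneg (g k ω * f k ω)]
    have key : ∀ k, ∫ ω, g k ω * c k ω ∂μ
        = ∫ ω, g k ω * (f (k + 1) ω ^ 2 - f k ω ^ 2) ∂μ := by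
      intro k
      have hmeq : ∀ h : Ω → ℝ, (fun ω => g k ω * h ω) = (G k).indicator h := by
        intro h; funext ω
        by_cases hω : ω ∈ G k <;> simp [hgdef, hω]
      have e1 : ∫ ω, g k ω * c k ω ∂μ = ∫ ω, g k ω * (f (k + 1) ω - f k ω) ^ 2 ∂μ := by
        rw [hmeq, hmeq, integral_indicator (𝒢.le k _ (hG_meas k)),
          integral_indicator (𝒢.le k _ (hG_meas k))]
        exact setIntegral_condExp (𝒢.le k) (hΔsq_int k) (hG_meas k)
      have e2 : (fun ω => g k ω * (f (k + 1) ω - f k ω) ^ 2) = fun ω =>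
          g k ω * (f (k + 1) ω ^ 2 - f k ω ^ 2)
            - 2 * (g k ω * f k ω) * (f (k + 1) ω - f k ω) := by
        funext ω; ring
      have hsm2 : StronglyMeasurable[𝒢 k] fun ω => 2 * (g k ω * f k ω) :=
        stronglyMeasurable_const.mul ((hg_sm k).mul (hf.stronglyAdapted k))
      have hzero : ∫ ω, 2 * (g k ω * f k ω) * (f (k + 1) ω - f k ω) ∂μ = 0 := by
        refine aux_integral_mul_diff_eq_zero hf k hsm2 (C := 2 * K) ?_
        refine Eventually.of_forall fun ω => ?_
        rw [abs_mul, abs_two]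
        nlinarith [hgf_bd k ω, abs_nonneg (g k ω * f k ω)]
      rw [e1, e2, integral_sub (hgd_int k) (hmid_int k), hzero, sub_zero]
    have hpt : ∀ᵐ ω ∂μ, ∀ n,
        ∑ k ∈ Finset.range n, g k ω * (f (k + 1) ω ^ 2 - f k ω ^ 2) ≤ ((K : ℝ) + 2) ^ 2 := by
      filter_upwards [hbdd] with ω hω
      have ha : ∀ n, ω ∈ G n →
          ∑ k ∈ Finset.range n, g k ω * (f (k + 1) ω ^ 2 - f k ω ^ 2) = f n ω ^ 2 := by
        intro n
        induction n with
        | zero => intro _; simp [congrFun hf0 ω]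
        | succ n ih =>
            intro hmem
            have hGn : ω ∈ G n := hG_anti n hmem
            rw [Finset.sum_range_succ, ih hGn, hg_mem n ω hGn, one_mul]
            ring
      intro n
      induction n with
      | zero => simp; positivity
      | succ n ih =>
          by_cases hω' : ω ∈ G n
          · rw [Finset.sum_range_succ, ha n hω', hg_mem n ω hω', one_mul]
            have h1 : |f n ω| ≤ K := hω' n le_rfl
            have h2 : |f (n + 1) ω| ≤ (K : ℝ) + 2 := by
              have := abs_sub_abs_le_abs_sub (f (n + 1) ω) (f n ω)
              linarith [hω n]
            have h3 : f (n + 1) ω ^ 2 ≤ ((K : ℝ) + 2) ^ 2 := by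
              rw [← sq_abs]
              exact pow_le_pow_left₀ (abs_nonneg _) h2 2
            linarith
          · rw [Finset.sum_range_succ, hg_not n ω hω', zero_mul, add_zero]
            exact ih
    have hgc_int : ∀ k, Integrable (fun ω => g k ω * c k ω) μ := fun k =>
      (hc_int k).bdd_mul ((hg_sm k).mono (𝒢.le k)).aestronglyMeasurable
        (Eventually.of_forall fun ω => by simpa [Real.norm_eq_abs] using hg_abs k ω)
    have hsb : ∀ n, ∫ ω, (∑ k ∈ Finset.range n, g k ω * c k ω) ∂μ ≤ ((K : ℝ) + 2) ^ 2 := by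
      intro n
      rw [integral_finset_sum _ fun k _ => hgc_int k]
      have e : ∑ k ∈ Finset.range n, ∫ ω, g k ω * c k ω ∂μ
          = ∫ ω, (∑ k ∈ Finset.range n, g k ω * (f (k + 1) ω ^ 2 - f k ω ^ 2)) ∂μ := by
        rw [integral_finset_sum _ fun k _ => hgd_int k]
        exact Finset.sum_congr rfl fun k _ => key k
      rw [e]
      have h1 : ∫ ω, (∑ k ∈ Finset.range n, g k ω * (f (k + 1) ω ^ 2 - f k ω ^ 2)) ∂μ
          ≤ ∫ _ω, ((K : ℝ) + 2) ^ 2 ∂μ := by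
        refine integral_mono_ae (integrable_finset_sum _ fun k _ => hgd_int k)
          (integrable_const _) ?_
        filter_upwards [hpt] with ω h using h n
      simpa using h1
    -- monotone convergence
    set F : ℕ → Ω → ℝ≥0∞ :=
      fun n ω => ENNReal.ofReal (∑ k ∈ Finset.range n, g k ω * c k ω) with hFdef
    have hgc_meas : ∀ k, Measurable fun ω => g k ω * c k ω := by
      intro k
      have h1 : Measurable (g k) :=
        (measurable_const.indicator (𝒢.le k _ (hG_meas k)))
      exact h1.mul ((hc_sm k).mono (𝒢.le k)).measurable
    have hF_meas : ∀ n, Measurable (F n) := fun n =>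
      ENNReal.measurable_ofReal.comp (Finset.measurable_sum _ fun k _ => hgc_meas k)
    have hF_mono : ∀ᵐ ω ∂μ, Monotone fun n => F n ω := by
      filter_upwards [ae_all_iff.2 hc_nonneg] with ω hnn
      refine monotone_nat_of_le_succ fun n => ?_
      refine ENNReal.ofReal_le_ofReal ?_
      rw [Finset.sum_range_succ]
      have : 0 ≤ g n ω * c n ω := mul_nonneg (hg_nonneg n ω) (hnn n)
      linarith
    have hlim : ∫⁻ ω, (⨆ n, F n ω) ∂μ ≤ ENNReal.ofReal (((K : ℝ) + 2) ^ 2) := by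
      rw [lintegral_iSup' (fun n => (hF_meas n).aemeasurable) hF_mono]
      refine iSup_le fun n => ?_
      have hnn : 0 ≤ᵐ[μ] fun ω => ∑ k ∈ Finset.range n, g k ω * c k ω := by
        filter_upwards [ae_all_iff.2 hc_nonneg] with ω h
        exact Finset.sum_nonneg fun k _ => mul_nonneg (hg_nonneg k ω) (h k)
      rw [hFdef, ← ofReal_integral_eq_lintegral_ofReal
        (integrable_finset_sum _ fun k _ => hgc_int k) hnn]
      exact ENNReal.ofReal_le_ofReal (hsb n)
    have hfin : ∀ᵐ ω ∂μ, (⨆ n, F n ω) < ⊤ :=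
      ae_lt_top (Measurable.iSup fun n => hF_meas n)
        (lt_of_le_of_lt hlim ENNReal.ofReal_lt_top).ne
    filter_upwards [hfin, ae_all_iff.2 hc_nonneg] with ω hsupfin hnn hK
    have hgn : ∀ k, g k ω = 1 := fun k => hg_mem k ω fun j _ => hK j
    refine summable_of_sum_range_le (c := (⨆ n, F n ω).toReal) (fun k => hnn k) fun n => ?_
    have e : ∑ k ∈ Finset.range n, c k ω = ∑ k ∈ Finset.range n, g k ω * c k ω := by
      refine Finset.sum_congr rfl fun k _ => ?_
      rw [hgn k, one_mul]
    rw [e]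
    have hnneg : 0 ≤ ∑ k ∈ Finset.range n, g k ω * c k ω :=
      Finset.sum_nonneg fun k _ => mul_nonneg (hg_nonneg k ω) (hnn k)
    calc ∑ k ∈ Finset.range n, g k ω * c k ω = (F n ω).toReal := by
          rw [hFdef, ENNReal.toReal_ofReal hnneg]
      _ ≤ (⨆ m, F m ω).toReal := ENNReal.toReal_mono hsupfin.ne (le_iSup (fun m => F m ω) n)
  filter_upwards [ae_all_iff.2 main] with ω hω hconv
  obtain ⟨L, hL⟩ := hconv
  obtain ⟨R, hR⟩ := (hL.abs.bddAbove_range)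
  refine hω ⌈R⌉₊ fun n => ?_
  exact (hR ⟨n, rfl⟩).trans (Nat.le_ceil R)


end Aux

/-- Convergence criterion for a submartingale `Y` with increments bounded by 1, via its
Doob decomposition `Y = A + M`: a.s., `lim Yₙ` exists and is finite iff `lim Aₙ < ∞`
and `Σₙ E[(Yₙ - Yₙ₋₁)² | 𝓕ₙ₋₁] < ∞`. -/
theorem stmt10 {Ω : Type*} {m0 : MeasurableSpace Ω}
    (ν : Measure Ω) [IsProbabilityMeasure ν]
    (ℱ : Filtration ℕ m0)
    (Y : ℕ → Ω → ℝ)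
    (hY : Submartingale Y ℱ ν)
    (hinc : ∀ n : ℕ, ∀ᵐ ω ∂ν, |Y (n + 1) ω - Y n ω| ≤ 1)
    (A : ℕ → Ω → ℝ)
    (hA : ∀ n, A n = fun ω =>
      ∑ k ∈ Finset.range n, (ν[fun ω' => Y (k + 1) ω' - Y k ω' | ℱ k]) ω) :
    ∀ᵐ ω ∂ν,
      ((∃ L : ℝ, Tendsto (fun n => Y n ω) atTop (nhds L)) ↔
        ((∃ L : ℝ, Tendsto (fun n => A n ω) atTop (nhds L)) ∧
          Summable fun n => (ν[fun ω' => (Y (n + 1) ω' - Y n ω') ^ 2 | ℱ n]) ω)) := by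
  set a : ℕ → Ω → ℝ := fun n => ν[fun ω' => Y (n + 1) ω' - Y n ω' | ℱ n] with hadef
  set b : ℕ → Ω → ℝ := fun n => ν[fun ω' => (Y (n + 1) ω' - Y n ω') ^ 2 | ℱ n] with hbdef
  have hYint : ∀ n, Integrable (Y n) ν := hY.integrable
  have hΔint : ∀ n, Integrable (fun ω => Y (n + 1) ω - Y n ω) ν := fun n =>
    (hYint (n + 1)).sub (hYint n)
  have hΔsq_int : ∀ n, Integrable (fun ω => (Y (n + 1) ω - Y n ω) ^ 2) ν := by
    intro n
    refine Integrable.mono' (integrable_const 1) ?_ ?_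
    · simpa only [pow_two] using (hΔint n).1.fun_mul (hΔint n).1
    · filter_upwards [hinc n] with ω h
      rw [Real.norm_eq_abs, abs_pow]
      calc |Y (n + 1) ω - Y n ω| ^ 2 ≤ 1 ^ 2 := pow_le_pow_left₀ (abs_nonneg _) h 2
        _ = 1 := one_pow 2
  have ha_sm : ∀ n, StronglyMeasurable[ℱ n] (a n) := fun n => stronglyMeasurable_condExp
  have ha_int : ∀ n, Integrable (a n) ν := fun n => integrable_condExp
  have hYcond : ∀ n, ν[Y n|ℱ n] = Y n := fun n =>
    condExp_of_stronglyMeasurable (ℱ.le n) (hY.stronglyAdapted n) (hYint n)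
  have ha_eq : ∀ n, a n =ᵐ[ν] fun ω => (ν[Y (n + 1)|ℱ n]) ω - Y n ω := by
    intro n
    have h4 : a n =ᵐ[ν] ν[Y (n + 1)|ℱ n] - ν[Y n|ℱ n] :=
      condExp_sub (hYint _) (hYint n) _
    rw [hYcond n] at h4
    exact h4
  have ha_nonneg : ∀ n, 0 ≤ᵐ[ν] a n := by
    intro n
    filter_upwards [ha_eq n, hY.2.1 n (n + 1) (Nat.le_succ n)] with ω e1 e2
    rw [e1]
    simpa using e2
  have ha_le_one : ∀ n, a n ≤ᵐ[ν] fun _ => (1 : ℝ) := by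
    intro n
    have h1 : (fun ω => Y (n + 1) ω - Y n ω) ≤ᵐ[ν] fun _ => (1 : ℝ) := by
      filter_upwards [hinc n] with ω h using (abs_le.mp h).2
    have h2 := condExp_mono (m := ℱ n) (hΔint n) (integrable_const 1) h1
    rwa [condExp_const (ℱ.le n)] at h2
  have ha01 : ∀ᵐ ω ∂ν, ∀ n, 0 ≤ a n ω ∧ a n ω ≤ 1 := by
    rw [ae_all_iff]
    intro n
    filter_upwards [ha_nonneg n, ha_le_one n] with ω e1 e2 using ⟨e1, e2⟩
  have hA_apply : ∀ n ω, A n ω = ∑ k ∈ Finset.range n, a k ω := fun n ω => by rw [hA n]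
  have hA_succ : ∀ n ω, A (n + 1) ω = A n ω + a n ω := by
    intro n ω
    rw [hA_apply, hA_apply, Finset.sum_range_succ]
  have hA_sm : ∀ n, StronglyMeasurable[ℱ n] (A (n + 1)) := by
    intro n
    rw [hA (n + 1)]
    exact Finset.stronglyMeasurable_fun_sum _ fun k hk =>
      stronglyMeasurable_condExp.mono (ℱ.mono (Nat.lt_succ_iff.mp (Finset.mem_range.mp hk)))
  have hA_sm' : ∀ n, StronglyMeasurable[ℱ n] (A n) := by
    intro n
    rw [hA n]
    exact Finset.stronglyMeasurable_fun_sum _ fun k hk =>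
      stronglyMeasurable_condExp.mono (ℱ.mono (Finset.mem_range.mp hk).le)
  have hA_int : ∀ n, Integrable (A n) ν := by
    intro n
    rw [hA n]
    exact integrable_finset_sum _ fun k _ => integrable_condExp
  set M : ℕ → Ω → ℝ := fun n ω => Y n ω - A n ω with hMdef
  have hM_adapted : StronglyAdapted ℱ M := fun n => (hY.stronglyAdapted n).sub (hA_sm' n)
  have hM_int : ∀ n, Integrable (M n) ν := fun n => (hYint n).sub (hA_int n)
  have hM : Martingale M ℱ ν := by
    refine martingale_nat hM_adapted hM_int fun n => ?_
    have h1 : ν[M (n + 1)|ℱ n] =ᵐ[ν] ν[Y (n + 1)|ℱ n] - ν[A (n + 1)|ℱ n] :=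
      condExp_sub (hYint _) (hA_int _) _
    have h2 : ν[A (n + 1)|ℱ n] = A (n + 1) :=
      condExp_of_stronglyMeasurable (ℱ.le n) (hA_sm n) (hA_int _)
    filter_upwards [h1, ha_eq n] with ω e1 e3
    rw [e1, Pi.sub_apply, h2]
    have e4 := hA_succ n ω
    simp only [hMdef]
    linarith
  set N : ℕ → Ω → ℝ := fun n ω => M n ω - M 0 ω with hNdef
  have hN : Martingale N ℱ ν := hM.sub (martingale_const_fun ℱ ν (hM.stronglyAdapted 0) (hM_int 0))
  have hN0 : N 0 = 0 := funext fun ω => sub_self _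
  have hMdiff : ∀ n ω, M (n + 1) ω - M n ω = (Y (n + 1) ω - Y n ω) - a n ω := by
    intro n ω
    simp only [hMdef]
    rw [hA_succ n ω]
    ring
  have hNdiff : ∀ n ω, N (n + 1) ω - N n ω = (Y (n + 1) ω - Y n ω) - a n ω := by
    intro n ω
    simp only [hNdef]
    rw [← hMdiff n ω]
    ring
  have hMbdd : ∀ᵐ ω ∂ν, ∀ n, |M (n + 1) ω - M n ω| ≤ 2 := by
    filter_upwards [ha01, ae_all_iff.2 hinc] with ω h1 h2 n
    rw [hMdiff n ω]
    have := h1 n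
    have := abs_le.mp (h2 n)
    rw [abs_le]
    constructor <;> linarith [this.1, this.2, (h1 n).1, (h1 n).2]
  have hNbdd : ∀ᵐ ω ∂ν, ∀ n, |N (n + 1) ω - N n ω| ≤ 2 := by
    filter_upwards [hMbdd] with ω h n
    rw [hNdiff n ω, ← hMdiff n ω]
    exact h n
  -- the conditional-variance comparison
  have hb_nonneg : ∀ᵐ ω ∂ν, ∀ n, 0 ≤ b n ω := by
    rw [ae_all_iff]
    exact fun n => condExp_nonneg (Eventually.of_forall fun ω => sq_nonneg _)
  have hcc_nonneg : ∀ᵐ ω ∂ν, ∀ n,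
      0 ≤ (ν[fun ω' => (N (n + 1) ω' - N n ω') ^ 2|ℱ n]) ω := by
    rw [ae_all_iff]
    exact fun n => condExp_nonneg (Eventually.of_forall fun ω => sq_nonneg _)
  have hasq_int : ∀ n, Integrable (fun ω => a n ω ^ 2) ν := by
    intro n
    refine Integrable.mono' (integrable_const 1) ?_ ?_
    · have hsm : AEStronglyMeasurable (a n) ν :=
        ((ha_sm n).mono (ℱ.le n)).aestronglyMeasurable
      simpa only [pow_two] using hsm.fun_mul hsm
    · filter_upwards [ha01] with ω h
      rw [Real.norm_eq_abs, abs_pow]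
      calc |a n ω| ^ 2 ≤ 1 ^ 2 := by
            refine pow_le_pow_left₀ (abs_nonneg _) ?_ 2
            rw [abs_le]
            exact ⟨by linarith [(h n).1], (h n).2⟩
        _ = 1 := one_pow 2
  have haΔ_int : ∀ n, Integrable (fun ω => (2 * a n ω) * (Y (n + 1) ω - Y n ω)) ν := by
    intro n
    refine (hΔint n).bdd_mul (c := 2) ?_ ?_
    · exact ((stronglyMeasurable_const.mul (ha_sm n)).mono (ℱ.le n)).aestronglyMeasurable
    · filter_upwards [ha01] with ω h
      rw [Real.norm_eq_abs, abs_mul, abs_two]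
      have : |a n ω| ≤ 1 := by
        rw [abs_le]; exact ⟨by linarith [(h n).1], (h n).2⟩
      linarith
  have hcc : ∀ᵐ ω ∂ν, ∀ n,
      (ν[fun ω' => (N (n + 1) ω' - N n ω') ^ 2|ℱ n]) ω = b n ω - a n ω ^ 2 := by
    rw [ae_all_iff]
    intro n
    have hfun : (fun ω' => (N (n + 1) ω' - N n ω') ^ 2)
        = fun ω' => ((Y (n + 1) ω' - Y n ω') ^ 2 + a n ω' ^ 2)
            - (2 * a n ω') * (Y (n + 1) ω' - Y n ω') := by
      funext ω'
      rw [hNdiff n ω']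
      ring
    have hpair_int : Integrable (fun ω' => (Y (n + 1) ω' - Y n ω') ^ 2 + a n ω' ^ 2) ν :=
      (hΔsq_int n).add (hasq_int n)
    have h1 : ν[fun ω' => ((Y (n + 1) ω' - Y n ω') ^ 2 + a n ω' ^ 2)
          - (2 * a n ω') * (Y (n + 1) ω' - Y n ω')|ℱ n]
        =ᵐ[ν] ν[fun ω' => (Y (n + 1) ω' - Y n ω') ^ 2 + a n ω' ^ 2|ℱ n]
          - ν[fun ω' => (2 * a n ω') * (Y (n + 1) ω' - Y n ω')|ℱ n] :=
      condExp_sub hpair_int (haΔ_int n) _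
    have h2 : ν[fun ω' => (Y (n + 1) ω' - Y n ω') ^ 2 + a n ω' ^ 2|ℱ n]
        =ᵐ[ν] b n + ν[fun ω' => a n ω' ^ 2|ℱ n] :=
      condExp_add (hΔsq_int n) (hasq_int n) _
    have h3 : ν[fun ω' => a n ω' ^ 2|ℱ n] = fun ω' => a n ω' ^ 2 := by
      refine condExp_of_stronglyMeasurable (ℱ.le n) ?_ (hasq_int n)
      simpa only [pow_two] using (ha_sm n).fun_mul (ha_sm n)
    have h4 : ν[fun ω' => (2 * a n ω') * (Y (n + 1) ω' - Y n ω')|ℱ n]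
        =ᵐ[ν] fun ω' => (2 * a n ω') * a n ω' := by
      have h5 := condExp_mul_of_stronglyMeasurable_left (m := ℱ n)
        (f := fun ω' => 2 * a n ω') (g := fun ω' => Y (n + 1) ω' - Y n ω')
        (stronglyMeasurable_const.mul (ha_sm n))
        (by simpa [Pi.mul_def] using haΔ_int n) (hΔint n)
      have h6 : (fun ω' => 2 * a n ω') * (ν[fun ω' => Y (n + 1) ω' - Y n ω'|ℱ n])
          = fun ω' => (2 * a n ω') * a n ω' := by
        funext ω'
        simp [hadef]
      rw [h6] at h5
      simpa [Pi.mul_def] using h5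
    rw [hfun]
    filter_upwards [h1, h2, h4] with ω e1 e2 e4
    rw [e1, Pi.sub_apply, e2, Pi.add_apply, h3, e4]
    ring
  -- mathlib convergence criteria
  have hMiff := hM.submartingale.bddAbove_iff_exists_tendsto (R := 2)
    (by filter_upwards [hMbdd] with ω h i using by simpa using h i)
  have hfor := aux_summable_of_tendsto hN hN0 hNbdd
  have hback := aux_tendsto_of_summable hN hN0 hNbdd
  filter_upwards [ha01, hMiff, hfor, hback, hcc, hb_nonneg, hcc_nonneg]
    with ω h1 h3 h4 h5 h6 h7 h8
  have hA0 : A 0 ω = 0 := by rw [hA_apply]; simp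
  constructor
  · rintro ⟨L, hL⟩
    have hAnonneg : ∀ n, 0 ≤ A n ω := by
      intro n
      rw [hA_apply]
      exact Finset.sum_nonneg fun k _ => (h1 k).1
    obtain ⟨U, hU⟩ := hL.bddAbove_range
    have hMbb : BddAbove (Set.range fun n => M n ω) := by
      refine ⟨U, ?_⟩
      rintro _ ⟨n, rfl⟩
      have := hU ⟨n, rfl⟩
      simp only [hMdef]
      have := hAnonneg n
      simp only [upperBounds, Set.mem_setOf_eq] at *
      linarith [hU ⟨n, rfl⟩]
    obtain ⟨cM, hcM⟩ := h3.mp hMbb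
    have hAtendsto : Tendsto (fun n => A n ω) atTop (𝓝 (L - cM)) := by
      have he : (fun n => A n ω) = fun n => Y n ω - M n ω := by
        funext n
        simp only [hMdef]
        ring
      rw [he]
      exact hL.sub hcM
    refine ⟨⟨L - cM, hAtendsto⟩, ?_⟩
    have hNconv : ∃ c, Tendsto (fun n => N n ω) atTop (𝓝 c) := by
      refine ⟨cM - M 0 ω, ?_⟩
      have : (fun n => N n ω) = fun n => M n ω - M 0 ω := by
        funext n; simp only [hNdef]
      rw [this]
      exact hcM.sub_const (M 0 ω)
    have hsumcc := h4 hNconv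
    have hAmono : Monotone fun n => A n ω :=
      monotone_nat_of_le_succ fun n => by rw [hA_succ n ω]; linarith [(h1 n).1]
    have hsuma : Summable fun n => a n ω := by
      refine summable_of_sum_range_le (c := L - cM) (fun n => (h1 n).1) fun n => ?_
      have := hAmono.ge_of_tendsto hAtendsto n
      rw [← hA_apply n ω]
      exact this
    have hsumasq : Summable fun n => a n ω ^ 2 :=
      hsuma.of_nonneg_of_le (fun n => sq_nonneg _)
        (fun n => by nlinarith [(h1 n).1, (h1 n).2])
    have heq : (fun n => b n ω)
        = fun n => (ν[fun ω' => (N (n + 1) ω' - N n ω') ^ 2|ℱ n]) ω + a n ω ^ 2 := by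
      funext n
      rw [h6 n]
      ring
    rw [heq]
    exact hsumcc.add hsumasq
  · rintro ⟨⟨LA, hLA⟩, hsumb⟩
    have hsumcc : Summable fun n => (ν[fun ω' => (N (n + 1) ω' - N n ω') ^ 2|ℱ n]) ω := by
      refine Summable.of_nonneg_of_le (fun n => h8 n) (fun n => ?_) hsumb
      rw [h6 n]
      nlinarith [sq_nonneg (a n ω)]
    obtain ⟨cN, hcN⟩ := h5 hsumcc
    refine ⟨cN + LA + Y 0 ω, ?_⟩
    have he : (fun n => Y n ω) = fun n => N n ω + A n ω + Y 0 ω := by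
      funext n
      simp only [hNdef, hMdef]
      rw [hA0]
      ring
    rw [he]
    exact (hcN.add hLA).add_const _
end

section
/- Define on X⁺ = ℤ₊^{ℤ₊} the function b(x) = (1/ζ(3+α))·Σ_{k=1}^∞ k^{-(3+α)}/(1+x_{k-1}) for a fixed α > 0, and the g-function g(i,x) = p_i·b(x) for i ≥ 1 and g(0,x) = 1 - b(x), where p_i > 0 and Σ p_i = 1. Then (svar_n √g)² ≤ √(var_n b) = O(n^{-(1+α/2)}), hence Σ_n (svar_n √g)² < ∞. -/
/-!
For `0 ≤ s, t` one has `(√s - √t)² ≤ |s - t|`, and `0 ≤ b ≤ 1`; hence for each first symbol `σ`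
the squared variation of `√g(σ, ·)` is at most `c_σ · var_n b` with `c_0 = 1`, `c_σ = p_σ`, and
summing over `σ` gives `(svar_n √g)² ≤ 2 var_n b`. Two sequences that agree up to index `n` change
`b` by at most the zeta tail `Σ_{k ≥ n+2} k^{-(3+α)}`, which a telescoping comparison bounds both by
`1/4` and by `(n+1)^{-(2+α)}`. The first bound gives `2 var_n b ≤ √(var_n b)`, the second the
summable decay `√(var_n b) ≤ (n+1)^{-(1+α/2)}`.
-/

open MeasureTheory Filter

/-- The one-sided shift on `ℕ^{ℤ₊}`. -/
def shiftN (x : ℕ → ℕ) : ℕ → ℕ := fun n => x (n + 1)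

/-- Prepending a symbol. -/
def consN (σ : ℕ) (x : ℕ → ℕ) : ℕ → ℕ :=
  fun n => match n with | 0 => σ | k + 1 => x k

/-- `var_n f (x)` (valued in `ℝ≥0∞`). -/
noncomputable def evarN (n : ℕ) (f : (ℕ → ℕ) → ℝ) (x : ℕ → ℕ) : ENNReal :=
  ⨆ y ∈ {y : ℕ → ℕ | ∀ i ≤ n, y i = x i}, ENNReal.ofReal |f x - f y|

/-- `var_n f = sup_x var_n f (x)`. -/
noncomputable def VarN (n : ℕ) (f : (ℕ → ℕ) → ℝ) : ENNReal :=
  ⨆ x : ℕ → ℕ, evarN n f x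

/-- `(svar_n f)² = sup_x Σ_σ (var_{n+1} f (σ,x))²`. -/
noncomputable def svarsqN (n : ℕ) (f : (ℕ → ℕ) → ℝ) : ENNReal :=
  ⨆ x : ℕ → ℕ, ∑' σ : ℕ, (evarN (n + 1) f (consN σ x)) ^ 2

/-- `b(x) = ζ(3+α)⁻¹ Σ_{k≥1} k^{-(3+α)}/(1+x_{k-1})`. -/
noncomputable def bfun (α : ℝ) (x : ℕ → ℕ) : ℝ :=
  (∑' k : ℕ, ((k : ℝ) + 1) ^ (-(3 + α)))⁻¹ *
    ∑' k : ℕ, ((k : ℝ) + 1) ^ (-(3 + α)) * (1 + (x k : ℝ))⁻¹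

/-- The `g`-function `g(i,x) = pᵢ·b(x)` for `i ≥ 1`, `g(0,x) = 1 - b(x)`, viewed as
a function of the sequence `y = (i, x₀, x₁, …)`. -/
noncomputable def Gfun (α : ℝ) (p : ℕ → ℝ) (y : ℕ → ℕ) : ℝ :=
  if y 0 = 0 then 1 - bfun α (shiftN y) else p (y 0) * bfun α (shiftN y)

lemma sq_sqrt_sub_sqrt_le_abs_sub {a b : ℝ} (ha : 0 ≤ a) (hb : 0 ≤ b) :
    (√a - √b) ^ 2 ≤ |a - b| := by
  have hsa := Real.sq_sqrt ha
  have hsb := Real.sq_sqrt hb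
  -- `(√a - √b)² = |√a - √b|·|√a - √b| ≤ |√a - √b|·(√a + √b) = |a - b|`
  rw [← sq_abs, sq, show a - b = (√a - √b) * (√a + √b) by nlinarith, abs_mul,
    abs_of_nonneg (by positivity : 0 ≤ √a + √b)]
  exact mul_le_mul_of_nonneg_left (abs_sub_le_iff.2 ⟨by linarith [Real.sqrt_nonneg b],
    by linarith [Real.sqrt_nonneg a]⟩) (abs_nonneg _)

lemma tsum_le_of_le_sub_succ {f a : ℕ → ℝ} (hf : ∀ n, 0 ≤ f n) (ha : ∀ n, 0 ≤ a n)
    (hfa : ∀ n, f n ≤ a n - a (n + 1)) : ∑' n, f n ≤ a 0 :=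
  Real.tsum_le_of_sum_range_le hf fun N =>
    (Finset.sum_le_sum fun i _ => hfa i).trans (by rw [Finset.sum_range_sub']; linarith [ha N])

lemma summable_nat_add_one_rpow {c : ℝ} (hc : c < -1) :
    Summable fun k : ℕ => ((k : ℝ) + 1) ^ c :=
  ((summable_nat_add_iff 1).2 (Real.summable_nat_rpow.2 hc)).congr fun n => by push_cast; rfl

lemma tsum_rpow_tail_le {α : ℝ} (hα : 0 ≤ α) (n : ℕ) :
    ∑' j : ℕ, ((j : ℝ) + n + 2) ^ (-(3 + α)) ≤
      ((n : ℝ) + 2) ^ (-α) / (2 * (((n : ℝ) + 1) * ((n : ℝ) + 2))) := by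
  set c := ((n : ℝ) + 2) ^ (-α)
  have hc : 0 ≤ c := by positivity
  -- `m⁻³ ≤ 1 / ((m - 1) m (m + 1))`, which telescopes
  let a : ℕ → ℝ := fun j => c / (2 * (((j : ℝ) + n + 1) * ((j : ℝ) + n + 2)))
  have key : ∀ j : ℕ, ((j : ℝ) + n + 2) ^ (-(3 + α)) ≤ a j - a (j + 1) := by
    intro j
    have hj : (0 : ℝ) ≤ j := j.cast_nonneg
    set m : ℝ := (j : ℝ) + n + 2
    have hm : 2 ≤ m := by simp only [m]; linarith [(n.cast_nonneg : (0 : ℝ) ≤ n)]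
    have hsplit : m ^ (-(3 + α)) = m ^ (-α) * (m ^ 3)⁻¹ := by
      rw [neg_add, Real.rpow_add (by linarith), Real.rpow_neg (by linarith),
        Real.rpow_neg (by linarith), mul_comm, ← Real.rpow_natCast]
      norm_num
    have hdiff : a j - a (j + 1) = c * ((m - 1) * m * (m + 1))⁻¹ := by
      have haj : a j = c / (2 * ((m - 1) * m)) := by simp only [a, m]; ring_nf
      have haj' : a (j + 1) = c / (2 * (m * (m + 1))) := by simp only [a, m]; push_cast; ring_nf
      have hm1 : m - 1 ≠ 0 := by linarith
      rw [haj, haj']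
      field_simp
      ring
    have hpow : m ^ (-α) ≤ c :=
      Real.rpow_le_rpow_of_nonpos (by positivity) (by simp only [m]; linarith) (by linarith)
    have hcube : (m ^ 3)⁻¹ ≤ ((m - 1) * m * (m + 1))⁻¹ :=
      inv_anti₀ (mul_pos (mul_pos (by linarith) (by linarith)) (by linarith)) (by nlinarith)
    rw [hsplit, hdiff]
    exact mul_le_mul hpow hcube (by positivity) hc
  calc ∑' j : ℕ, ((j : ℝ) + n + 2) ^ (-(3 + α)) ≤ a 0 :=
        tsum_le_of_le_sub_succ (fun j => by positivity) (fun j => by positivity) key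
    _ = _ := by simp [a]

lemma tsum_rpow_tail_le_one_fourth {α : ℝ} (hα : 0 ≤ α) (n : ℕ) :
    ∑' j : ℕ, ((j : ℝ) + n + 2) ^ (-(3 + α)) ≤ 1 / 4 := by
  have hn : (0 : ℝ) ≤ n := n.cast_nonneg
  refine (tsum_rpow_tail_le hα n).trans ?_
  rw [div_le_div_iff₀ (by positivity) (by norm_num)]
  have : ((n : ℝ) + 2) ^ (-α) ≤ 1 := Real.rpow_le_one_of_one_le_of_nonpos (by linarith) (by linarith)
  nlinarith

lemma tsum_rpow_tail_le_rpow {α : ℝ} (hα : 0 ≤ α) (n : ℕ) :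
    ∑' j : ℕ, ((j : ℝ) + n + 2) ^ (-(3 + α)) ≤ ((n : ℝ) + 1) ^ (-(2 + α)) := by
  have hn : (0 : ℝ) ≤ n := n.cast_nonneg
  refine (tsum_rpow_tail_le hα n).trans ?_
  have hpow : ((n : ℝ) + 2) ^ (-α) ≤ ((n : ℝ) + 1) ^ (-α) :=
    Real.rpow_le_rpow_of_nonpos (by positivity) (by linarith) (by linarith)
  have hsplit : ((n : ℝ) + 1) ^ (-(2 + α)) = ((n : ℝ) + 1) ^ (-α) / ((n : ℝ) + 1) ^ 2 := by
    rw [show -(2 + α) = -α - 2 by ring, Real.rpow_sub (by positivity), Real.rpow_two]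
  rw [hsplit, div_le_div_iff₀ (by positivity) (by positivity)]
  have : 0 ≤ ((n : ℝ) + 1) ^ (-α) := by positivity
  nlinarith [mul_le_mul_of_nonneg_right hpow (by positivity : (0 : ℝ) ≤ ((n : ℝ) + 1) ^ 2)]

section bfun

variable {α : ℝ}

lemma summable_bfun_weight (hα : -2 < α) : Summable fun k : ℕ => ((k : ℝ) + 1) ^ (-(3 + α)) :=
  summable_nat_add_one_rpow (by linarith)

lemma one_le_tsum_bfun_weight (hα : -2 < α) : 1 ≤ ∑' k : ℕ, ((k : ℝ) + 1) ^ (-(3 + α)) := by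
  simpa using (summable_bfun_weight hα).le_tsum 0 fun k _ => by positivity

lemma inv_one_add_natCast_le_one (m : ℕ) : (1 + (m : ℝ))⁻¹ ≤ 1 :=
  inv_le_one_of_one_le₀ (by simp)

lemma abs_inv_one_add_natCast_sub_le_one (a b : ℕ) :
    |(1 + (a : ℝ))⁻¹ - (1 + (b : ℝ))⁻¹| ≤ 1 := by
  have ha : 0 ≤ (1 + (a : ℝ))⁻¹ := by positivity
  have hb : 0 ≤ (1 + (b : ℝ))⁻¹ := by positivity
  rw [abs_sub_le_iff]
  constructor <;> linarith [inv_one_add_natCast_le_one a, inv_one_add_natCast_le_one b]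

lemma summable_bfun_terms (hα : -2 < α) (x : ℕ → ℕ) :
    Summable fun k : ℕ => ((k : ℝ) + 1) ^ (-(3 + α)) * (1 + (x k : ℝ))⁻¹ :=
  (summable_bfun_weight hα).of_nonneg_of_le (fun k => by positivity)
    fun k => mul_le_of_le_one_right (by positivity) (inv_one_add_natCast_le_one _)

lemma bfun_nonneg (x : ℕ → ℕ) : 0 ≤ bfun α x := by
  unfold bfun
  positivity

lemma bfun_le_one (hα : -2 < α) (x : ℕ → ℕ) : bfun α x ≤ 1 := by
  have hZ := one_le_tsum_bfun_weight hα
  rw [bfun, inv_mul_le_one₀ (by linarith)]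
  exact (summable_bfun_terms hα x).tsum_le_tsum
    (fun k => mul_le_of_le_one_right (by positivity) (inv_one_add_natCast_le_one _))
    (summable_bfun_weight hα)

lemma abs_bfun_sub_le_tsum_tail (hα : -2 < α) {n : ℕ} {x y : ℕ → ℕ}
    (hxy : ∀ i ≤ n, y i = x i) :
    |bfun α x - bfun α y| ≤ ∑' j : ℕ, ((j : ℝ) + n + 2) ^ (-(3 + α)) := by
  set w : ℕ → ℝ := fun k => ((k : ℝ) + 1) ^ (-(3 + α))
  set d : ℕ → ℝ := fun k => w k * ((1 + (x k : ℝ))⁻¹ - (1 + (y k : ℝ))⁻¹)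
  have hd : Summable d := by
    simpa only [d, mul_sub] using (summable_bfun_terms hα x).sub (summable_bfun_terms hα y)
  have hsub : bfun α x - bfun α y = (∑' k, w k)⁻¹ * ∑' j, d (j + (n + 1)) := by
    have hhead : ∑ k ∈ Finset.range (n + 1), d k = 0 :=
      Finset.sum_eq_zero fun k hk => by
        simp [d, hxy k (Nat.lt_succ_iff.1 (Finset.mem_range.1 hk))]
    have hfull : bfun α x - bfun α y = (∑' k, w k)⁻¹ * ∑' k, d k := by
      rw [bfun, bfun, ← mul_sub, ← (summable_bfun_terms hα x).tsum_sub (summable_bfun_terms hα y)]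
      simp only [d, w, mul_sub]
    rw [hfull, ← hd.sum_add_tsum_nat_add (n + 1), hhead, zero_add]
  have htail : HasSum (fun j : ℕ => w (j + (n + 1)))
      (∑' j : ℕ, ((j : ℝ) + n + 2) ^ (-(3 + α))) := by
    have hw : (fun j : ℕ => w (j + (n + 1))) = fun j : ℕ => ((j : ℝ) + n + 2) ^ (-(3 + α)) := by
      ext j; simp only [w]; push_cast; ring_nf
    have hs : Summable fun j : ℕ => w (j + (n + 1)) :=
      (summable_nat_add_iff (n + 1)).2 (summable_bfun_weight hα)
    rw [hw] at hs ⊢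
    exact hs.hasSum
  have hbound : |∑' j, d (j + (n + 1))| ≤ ∑' j : ℕ, ((j : ℝ) + n + 2) ^ (-(3 + α)) :=
    tsum_of_norm_bounded (f := fun j => d (j + (n + 1))) htail fun j => by
      have hw : 0 ≤ w (j + (n + 1)) := by positivity
      rw [Real.norm_eq_abs, abs_mul, abs_of_nonneg hw]
      exact mul_le_of_le_one_right hw (abs_inv_one_add_natCast_sub_le_one _ _)
  have hZ := one_le_tsum_bfun_weight hα
  rw [hsub, abs_mul, abs_inv, abs_of_pos (by linarith)]
  exact (mul_le_of_le_one_left (abs_nonneg _) (inv_le_one_of_one_le₀ hZ)).trans hbound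

end bfun

lemma ofReal_abs_sub_le_VarN {n : ℕ} {f : (ℕ → ℕ) → ℝ} {x y : ℕ → ℕ}
    (hxy : ∀ i ≤ n, y i = x i) : ENNReal.ofReal |f x - f y| ≤ VarN n f :=
  (le_iSup₂ (f := fun y (_ : y ∈ {y : ℕ → ℕ | ∀ i ≤ n, y i = x i}) =>
    ENNReal.ofReal |f x - f y|) y hxy).trans (le_iSup (fun x => evarN n f x) x)

lemma VarN_le_ofReal {n : ℕ} {f : (ℕ → ℕ) → ℝ} {c : ℝ}
    (h : ∀ x y : ℕ → ℕ, (∀ i ≤ n, y i = x i) → |f x - f y| ≤ c) :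
    VarN n f ≤ ENNReal.ofReal c :=
  iSup_le fun x => iSup₂_le fun y hy => ENNReal.ofReal_le_ofReal (h x y hy)

lemma ENNReal.two_mul_le_rpow_one_half {a : ENNReal} (ha : a ≤ ENNReal.ofReal (1 / 4)) :
    2 * a ≤ a ^ (1 / 2 : ℝ) := by
  have ha_top : a ≠ ⊤ := ne_top_of_le_ne_top ENNReal.ofReal_ne_top ha
  rw [← ENNReal.ofReal_toReal ha_top] at ha ⊢
  set r := a.toReal
  have hr : 0 ≤ r := ENNReal.toReal_nonneg
  have hr4 : r ≤ 1 / 4 := (ENNReal.ofReal_le_ofReal_iff (by norm_num)).1 ha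
  rw [ENNReal.ofReal_rpow_of_nonneg hr (by norm_num), ← Real.sqrt_eq_rpow,
    ← ENNReal.ofReal_ofNat 2, ← ENNReal.ofReal_mul (by norm_num)]
  refine ENNReal.ofReal_le_ofReal ?_
  nlinarith [Real.sq_sqrt hr, Real.sqrt_nonneg r]

def Gcoeff (p : ℕ → ℝ) (σ : ℕ) : ℝ := if σ = 0 then 1 else p σ

lemma Gcoeff_nonneg {p : ℕ → ℝ} (hp : ∀ i, 1 ≤ i → 0 ≤ p i) (σ : ℕ) : 0 ≤ Gcoeff p σ := by
  unfold Gcoeff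
  split_ifs with hσ
  · exact zero_le_one
  · exact hp σ (Nat.one_le_iff_ne_zero.2 hσ)

lemma tsum_ofReal_Gcoeff {p : ℕ → ℝ} (hp : ∀ i, 1 ≤ i → 0 ≤ p i)
    (hp1 : HasSum (fun i : ℕ => p (i + 1)) 1) : ∑' σ, ENNReal.ofReal (Gcoeff p σ) = 2 := by
  have hsucc : ∑' i : ℕ, ENNReal.ofReal (Gcoeff p (i + 1)) = 1 := by
    simp only [Gcoeff, Nat.add_one_ne_zero, if_false]
    rw [← ENNReal.ofReal_tsum_of_nonneg (fun i => hp (i + 1) (Nat.le_add_left 1 i)) hp1.summable,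
      hp1.tsum_eq, ENNReal.ofReal_one]
  rw [tsum_eq_zero_add' ENNReal.summable, hsucc, show Gcoeff p 0 = 1 from if_pos rfl,
    ENNReal.ofReal_one, one_add_one_eq_two]

section Gfun

variable {α : ℝ} {p : ℕ → ℝ}

lemma sq_sqrt_Gfun_sub_le (hα : -2 < α) (hp : ∀ i, 1 ≤ i → 0 ≤ p i) {y y' : ℕ → ℕ}
    (h0 : y' 0 = y 0) :
    (√(Gfun α p y) - √(Gfun α p y')) ^ 2 ≤
      Gcoeff p (y 0) * |bfun α (shiftN y) - bfun α (shiftN y')| := by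
  have hb := bfun_le_one hα (shiftN y)
  have hb' := bfun_le_one hα (shiftN y')
  have hb0 := bfun_nonneg (α := α) (shiftN y)
  have hb0' := bfun_nonneg (α := α) (shiftN y')
  unfold Gfun Gcoeff
  rw [h0]
  split_ifs with hσ
  · calc _ ≤ |(1 - bfun α (shiftN y)) - (1 - bfun α (shiftN y'))| :=
          sq_sqrt_sub_sqrt_le_abs_sub (by linarith) (by linarith)
      _ = 1 * |bfun α (shiftN y) - bfun α (shiftN y')| := by
          rw [one_mul, sub_sub_sub_cancel_left, abs_sub_comm]
  · have hpσ := hp (y 0) (Nat.one_le_iff_ne_zero.2 hσ)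
    rw [Real.sqrt_mul hpσ, Real.sqrt_mul hpσ, ← mul_sub, mul_pow, Real.sq_sqrt hpσ]
    exact mul_le_mul_of_nonneg_left (sq_sqrt_sub_sqrt_le_abs_sub hb0 hb0') hpσ

lemma evarN_sqrt_Gfun_consN_sq_le (hα : -2 < α) (hp : ∀ i, 1 ≤ i → 0 ≤ p i)
    (n σ : ℕ) (x : ℕ → ℕ) :
    evarN (n + 1) (fun y => √(Gfun α p y)) (consN σ x) ^ 2 ≤
      ENNReal.ofReal (Gcoeff p σ) * VarN n (bfun α) := by
  rw [evarN, ENNReal.iSup_pow_of_ne_zero two_ne_zero]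
  refine iSup_le fun y => ?_
  rw [ENNReal.iSup_pow_of_ne_zero two_ne_zero]
  refine iSup_le fun hy => ?_
  have h0 : y 0 = consN σ x 0 := hy 0 (Nat.zero_le _)
  have hshift : ∀ i ≤ n, shiftN y i = x i := fun i hi => hy (i + 1) (by omega)
  calc ENNReal.ofReal |√(Gfun α p (consN σ x)) - √(Gfun α p y)| ^ 2
      = ENNReal.ofReal ((√(Gfun α p (consN σ x)) - √(Gfun α p y)) ^ 2) := by
        rw [← ENNReal.ofReal_pow (abs_nonneg _), sq_abs]
    _ ≤ ENNReal.ofReal (Gcoeff p σ * |bfun α x - bfun α (shiftN y)|) :=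
        ENNReal.ofReal_le_ofReal (sq_sqrt_Gfun_sub_le hα hp h0)
    _ = ENNReal.ofReal (Gcoeff p σ) * ENNReal.ofReal |bfun α x - bfun α (shiftN y)| :=
        ENNReal.ofReal_mul (Gcoeff_nonneg hp σ)
    _ ≤ ENNReal.ofReal (Gcoeff p σ) * VarN n (bfun α) := by
        gcongr
        exact ofReal_abs_sub_le_VarN hshift

lemma svarsqN_sqrt_Gfun_le (hα : -2 < α) (hp : ∀ i, 1 ≤ i → 0 ≤ p i)
    (hp1 : HasSum (fun i : ℕ => p (i + 1)) 1) (n : ℕ) :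
    svarsqN n (fun y => √(Gfun α p y)) ≤ 2 * VarN n (bfun α) :=
  iSup_le fun x => calc
    ∑' σ, evarN (n + 1) (fun y => √(Gfun α p y)) (consN σ x) ^ 2
        ≤ ∑' σ, ENNReal.ofReal (Gcoeff p σ) * VarN n (bfun α) :=
      ENNReal.tsum_le_tsum fun σ => evarN_sqrt_Gfun_consN_sq_le hα hp n σ x
    _ = 2 * VarN n (bfun α) := by rw [ENNReal.tsum_mul_right, tsum_ofReal_Gcoeff hp hp1]

end Gfun

section VarN

variable {α : ℝ}

lemma VarN_bfun_le_tsum_tail (hα : -2 < α) (n : ℕ) :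
    VarN n (bfun α) ≤ ENNReal.ofReal (∑' j : ℕ, ((j : ℝ) + n + 2) ^ (-(3 + α))) :=
  VarN_le_ofReal fun _ _ => abs_bfun_sub_le_tsum_tail hα

lemma VarN_bfun_le_one_fourth (hα : 0 ≤ α) (n : ℕ) :
    VarN n (bfun α) ≤ ENNReal.ofReal (1 / 4) :=
  (VarN_bfun_le_tsum_tail (by linarith) n).trans
    (ENNReal.ofReal_le_ofReal (tsum_rpow_tail_le_one_fourth hα n))

lemma VarN_bfun_rpow_one_half_le (hα : 0 ≤ α) (n : ℕ) :
    VarN n (bfun α) ^ (1 / 2 : ℝ) ≤ ENNReal.ofReal (((n : ℝ) + 1) ^ (-(1 + α / 2))) := by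
  have hV := (VarN_bfun_le_tsum_tail (by linarith) n).trans
    (ENNReal.ofReal_le_ofReal (tsum_rpow_tail_le_rpow hα n))
  refine (ENNReal.rpow_le_rpow hV (by norm_num)).trans_eq ?_
  rw [ENNReal.ofReal_rpow_of_nonneg (by positivity) (by norm_num), ← Real.rpow_mul (by positivity)]
  ring_nf

end VarN

/-- For the example `g(i,x) = pᵢ b(x)`, `g(0,x) = 1-b(x)`:
`(svar_n √g)² ≤ √(var_n b) = O(n^{-(1+α/2)})`, hence `Σ_n (svar_n √g)² < ∞`. -/
theorem stmt17 (α : ℝ) (hα : 0 < α) (p : ℕ → ℝ)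
    (hp : ∀ i, 1 ≤ i → 0 < p i) (hp1 : HasSum (fun i : ℕ => p (i + 1)) 1) :
    (∀ n : ℕ, svarsqN n (fun y => Real.sqrt (Gfun α p y)) ≤
        (VarN n (bfun α)) ^ (1 / 2 : ℝ)) ∧
      (∃ C : ENNReal, C < ⊤ ∧ ∀ n : ℕ, 1 ≤ n →
        (VarN n (bfun α)) ^ (1 / 2 : ℝ) ≤
          C * ENNReal.ofReal ((n : ℝ) ^ (-(1 + α / 2)))) ∧
      ∑' n : ℕ, svarsqN n (fun y => Real.sqrt (Gfun α p y)) < ⊤ := by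
  have hp' : ∀ i, 1 ≤ i → 0 ≤ p i := fun i hi => (hp i hi).le
  have hsvar (n : ℕ) : svarsqN n (fun y => √(Gfun α p y)) ≤ VarN n (bfun α) ^ (1 / 2 : ℝ) :=
    (svarsqN_sqrt_Gfun_le (by linarith) hp' hp1 n).trans
      (ENNReal.two_mul_le_rpow_one_half (VarN_bfun_le_one_fourth hα.le n))
  have hdecay := VarN_bfun_rpow_one_half_le hα.le
  refine ⟨hsvar, ⟨1, ENNReal.one_lt_top, fun n hn => ?_⟩, ?_⟩
  · rw [one_mul]
    exact (hdecay n).trans (ENNReal.ofReal_le_ofReal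
      (Real.rpow_le_rpow_of_nonpos (by exact_mod_cast hn) (by linarith) (by linarith)))
  · calc ∑' n : ℕ, svarsqN n (fun y => √(Gfun α p y))
        ≤ ∑' n : ℕ, ENNReal.ofReal (((n : ℝ) + 1) ^ (-(1 + α / 2))) :=
          ENNReal.tsum_le_tsum fun n => (hsvar n).trans (hdecay n)
      _ = ENNReal.ofReal (∑' n : ℕ, ((n : ℝ) + 1) ^ (-(1 + α / 2))) :=
          (ENNReal.ofReal_tsum_of_nonneg (fun n => by positivity)
            (summable_nat_add_one_rpow (by linarith))).symm
      _ < ⊤ := ENNReal.ofReal_lt_top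
end

section
/- Let T : X → X be the two-sided shift on X = S^ℤ (S countable), μ and μ̃ two T-invariant probability measures, and 𝓕⁻ the σ-algebra generated by the coordinates (x_{-1}, x_{-2}, …). If μ̃ restricted to 𝓕⁻ is absolutely continuous with respect to μ restricted to 𝓕⁻, then μ̃ ≪ μ on all of the Borel σ-algebra. Consequently, if μ and μ̃ are ergodic and distinct, then μ̃|𝓕⁻ is not absolutely continuous with respect to μ|𝓕⁻. -/
open MeasureTheory Filter
open scoped ENNReal NNReal symmDiff

/-- The two-sided shift on `S^ℤ`. -/
def shiftZ {S : Type*} (x : ℤ → S) : ℤ → S := fun i => x (i + 1)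

/-- The σ-algebra `𝓕⁻` generated by the past coordinates `x₋₁, x₋₂, …`. -/
def Fminus (S : Type*) [MeasurableSpace S] : MeasurableSpace (ℤ → S) :=
  ⨆ n : ℕ, MeasurableSpace.comap (fun x : ℤ → S => x (-(n + 1) : ℤ)) inferInstance

lemma shiftZ_measurable {S : Type*} [MeasurableSpace S] : Measurable (shiftZ (S := S)) :=
  measurable_pi_lambda _ fun i => measurable_pi_apply (i + 1)

lemma shiftZ_iterate {S : Type*} (n : ℕ) (x : ℤ → S) :
    shiftZ^[n] x = fun i => x (i + n) := by
  induction n generalizing x with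
  | zero => simp
  | succ n ih =>
    rw [Function.iterate_succ_apply, ih]
    funext i
    show x (i + n + 1) = x (i + (n + 1 : ℕ))
    congr 1
    push_cast
    ring

/-- The shift as a measurable equivalence. -/
def shiftE (S : Type*) [MeasurableSpace S] : (ℤ → S) ≃ᵐ (ℤ → S) where
  toFun := shiftZ
  invFun x i := x (i - 1)
  left_inv x := funext fun i => by show x (i - 1 + 1) = x i; congr 1; ring
  right_inv x := funext fun i => by show x (i + 1 - 1) = x i; congr 1; ring
  measurable_toFun := shiftZ_measurable
  measurable_invFun := measurable_pi_lambda _ fun i => measurable_pi_apply (i - 1)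

lemma comap_iterate_shift (S : Type*) [MeasurableSpace S] (n : ℕ) :
    (Fminus S).comap (shiftZ^[n]) =
      ⨆ k : ℕ, MeasurableSpace.comap (fun x : ℤ → S => x ((n : ℤ) - (k + 1))) inferInstance := by
  rw [Fminus, MeasurableSpace.comap_iSup]
  congr 1
  funext k
  rw [MeasurableSpace.comap_comp]
  congr 1
  funext x
  show shiftZ^[n] x (-(k + 1) : ℤ) = x ((n : ℤ) - (k + 1))
  rw [shiftZ_iterate]
  exact congrArg x (by omega)

/-- For shift-invariant probability measures `μ, μ̃` on `S^ℤ`: if `μ̃|𝓕⁻ ≪ μ|𝓕⁻` then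
`μ̃ ≪ μ` on the whole Borel σ-algebra. Consequently, distinct ergodic `μ, μ̃` cannot
satisfy `μ̃|𝓕⁻ ≪ μ|𝓕⁻`. -/
theorem stmt19 {S : Type*} [Countable S] [MeasurableSpace S] [MeasurableSingletonClass S]
    (hle : Fminus S ≤ (inferInstance : MeasurableSpace (ℤ → S)))
    (μ μt : Measure (ℤ → S)) [IsProbabilityMeasure μ] [IsProbabilityMeasure μt]
    (hinv : MeasurePreserving shiftZ μ μ) (hinvt : MeasurePreserving shiftZ μt μt) :
    ((μt.trim hle ≪ μ.trim hle) → μt ≪ μ) ∧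
      (Ergodic shiftZ μ → Ergodic shiftZ μt → μ ≠ μt → ¬ (μt.trim hle ≪ μ.trim hle)) := by
  classical
  -- the filtration `F n = σ(x_i, i < n)`
  set F : ℕ → MeasurableSpace (ℤ → S) := fun n => (Fminus S).comap (shiftZ^[n]) with hFdef
  have hFle : ∀ n, F n ≤ (inferInstance : MeasurableSpace (ℤ → S)) := by
    intro n
    calc F n ≤ (inferInstance : MeasurableSpace (ℤ → S)).comap (shiftZ^[n]) :=
          MeasurableSpace.comap_mono hle
      _ ≤ _ := measurable_iff_comap_le.mp (shiftZ_measurable.iterate n)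
  have hmono : Monotone F := by
    refine monotone_nat_of_le_succ fun n => ?_
    rw [hFdef]
    simp only
    rw [comap_iterate_shift, comap_iterate_shift]
    refine iSup_le fun k => ?_
    have h2 : ((n : ℤ)) - (k + 1) = ((n + 1 : ℕ) : ℤ) - (((k + 1 : ℕ) : ℤ) + 1) := by
      push_cast; ring
    rw [h2]
    exact le_iSup (fun j : ℕ => MeasurableSpace.comap
      (fun x : ℤ → S => x (((n + 1 : ℕ) : ℤ) - ((j : ℤ) + 1))) inferInstance) (k + 1)
  have hsup : (⨆ n, F n) = (inferInstance : MeasurableSpace (ℤ → S)) := by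
    refine le_antisymm (iSup_le hFle) ?_
    have hpi : (inferInstance : MeasurableSpace (ℤ → S)) =
        ⨆ i : ℤ, MeasurableSpace.comap (fun x : ℤ → S => x i) inferInstance := rfl
    rw [hpi]
    refine iSup_le fun i => ?_
    set n : ℕ := (i + 1).toNat with hn
    have hni : (i + 1 : ℤ) ≤ (n : ℤ) := Int.self_le_toNat _
    set k : ℕ := ((n : ℤ) - (i + 1)).toNat with hk
    have hkz : (k : ℤ) = (n : ℤ) - (i + 1) := Int.toNat_of_nonneg (by omega)
    have hcoord : i = (n : ℤ) - ((k : ℤ) + 1) := by omega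
    refine le_trans ?_ (le_iSup F n)
    rw [hFdef]
    simp only
    rw [comap_iterate_shift, hcoord]
    exact le_iSup (fun j : ℕ => MeasurableSpace.comap
      (fun x : ℤ → S => x ((n : ℤ) - ((j : ℤ) + 1))) inferInstance) k
  -- the algebra of sets measurable w.r.t. some `F n`
  set 𝒜 : Set (Set (ℤ → S)) := {s | ∃ n, MeasurableSet[F n] s} with h𝒜
  have halg : IsSetAlgebra 𝒜 :=
    { empty_mem := ⟨0, @MeasurableSet.empty _ (F 0)⟩
      compl_mem := by rintro A ⟨n, hA⟩; exact ⟨n, hA.compl⟩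
      union_mem := by
        rintro A B ⟨n, hA⟩ ⟨m, hB⟩
        exact ⟨max n m, MeasurableSet.union (hmono (le_max_left n m) _ hA)
          (hmono (le_max_right n m) _ hB)⟩ }
  have hgen : (inferInstance : MeasurableSpace (ℤ → S)) = MeasurableSpace.generateFrom 𝒜 := by
    rw [← hsup]; exact MeasurableSpace.measurableSpace_iSup_eq F
  haveI : IsProbabilityMeasure (μ.trim hle) :=
    ⟨by rw [trim_measurableSet_eq hle MeasurableSet.univ]; exact measure_univ⟩
  haveI : IsProbabilityMeasure (μt.trim hle) :=
    ⟨by rw [trim_measurableSet_eq hle MeasurableSet.univ]; exact measure_univ⟩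
  have part1 : (μt.trim hle ≪ μ.trim hle) → μt ≪ μ := by
    intro habs
    set f : (ℤ → S) → ℝ≥0∞ := (μt.trim hle).rnDeriv (μ.trim hle) with hf
    have hfm : Measurable[Fminus S] f := Measure.measurable_rnDeriv _ _
    have hwd : (μ.trim hle).withDensity f = μt.trim hle :=
      Measure.withDensity_rnDeriv_eq _ _ habs
    have key : ∀ A : Set (ℤ → S), MeasurableSet[Fminus S] A → μt A = ∫⁻ x in A, f x ∂μ := by
      intro A hA
      calc μt A = (μt.trim hle) A := (trim_measurableSet_eq hle hA).symm
        _ = ((μ.trim hle).withDensity f) A := by rw [hwd]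
        _ = ∫⁻ x in A, f x ∂(μ.trim hle) := withDensity_apply f hA
        _ = ∫⁻ x, A.indicator f x ∂(μ.trim hle) := (lintegral_indicator hA f).symm
        _ = ∫⁻ x, A.indicator f x ∂μ := lintegral_trim hle (hfm.indicator hA)
        _ = ∫⁻ x in A, f x ∂μ := lintegral_indicator (hle _ hA) f
    have hInt : ∫⁻ x, f x ∂μ = 1 := by
      have h := key Set.univ MeasurableSet.univ
      rw [measure_univ, Measure.restrict_univ] at h
      exact h.symm
    have keyn : ∀ A ∈ 𝒜, ∃ A', MeasurableSet A' ∧ μ A' = μ A ∧ μt A = ∫⁻ x in A', f x ∂μ := by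
      rintro A ⟨n, hA⟩
      obtain ⟨A', hA', rfl⟩ := MeasurableSpace.measurableSet_comap.mp hA
      refine ⟨A', hle _ hA', ?_, ?_⟩
      · exact ((hinv.iterate n).measure_preimage (hle _ hA').nullMeasurableSet).symm
      · rw [(hinvt.iterate n).measure_preimage (hle _ hA').nullMeasurableSet, key A' hA']
    set ρ : Measure (ℤ → S) := μ + μt with hρ
    have hdense : ρ.MeasureDense 𝒜 :=
      Measure.MeasureDense.of_generateFrom_isSetAlgebra_finite ρ halg hgen
    refine Measure.AbsolutelyContinuous.mk fun B hB hμB => ?_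
    refine le_antisymm ?_ zero_le
    refine ENNReal.le_of_forall_pos_le_add fun ε hε _ => ?_
    rw [zero_add]
    obtain ⟨δ, hδ0, hδ⟩ := exists_pos_setLIntegral_lt_of_measure_lt (μ := μ) (f := f)
      (by rw [hInt]; exact ENNReal.one_ne_top)
      (ε := (ε : ℝ≥0∞) / 2) (by simp [hε.ne'])
    set r : ℝ≥0∞ := min 1 (min δ ((ε : ℝ≥0∞) / 2)) with hr
    have hr0 : 0 < r := by
      refine lt_min one_pos (lt_min hδ0 ?_)
      simp [pos_iff_ne_zero, hε.ne']
    have hrtop : r ≠ ∞ := ne_top_of_le_ne_top ENNReal.one_ne_top (min_le_left _ _)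
    obtain ⟨A, hA𝒜, hAB⟩ := hdense.approx B hB (measure_ne_top ρ B) r.toReal
      (ENNReal.toReal_pos hr0.ne' hrtop)
    rw [ENNReal.ofReal_toReal hrtop] at hAB
    obtain ⟨A', hA'm, hμA', hμtA⟩ := keyn A hA𝒜
    have hρμ : μ ≤ ρ := Measure.le_add_right le_rfl
    have hρμt : μt ≤ ρ := Measure.le_add_left le_rfl
    have hμA : μ A' < δ := by
      rw [hμA']
      calc μ A ≤ μ (B ∪ B ∆ A) := by
            refine measure_mono fun x hx => ?_
            by_cases hxB : x ∈ B
            · exact Or.inl hxB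
            · exact Or.inr (Or.inr ⟨hx, hxB⟩)
        _ ≤ μ B + μ (B ∆ A) := measure_union_le _ _
        _ = μ (B ∆ A) := by rw [hμB, zero_add]
        _ ≤ ρ (B ∆ A) := hρμ _
        _ < r := hAB
        _ ≤ δ := le_trans (min_le_right _ _) (min_le_left _ _)
    calc μt B ≤ μt (A ∪ B ∆ A) := by
          refine measure_mono fun x hx => ?_
          by_cases hxA : x ∈ A
          · exact Or.inl hxA
          · exact Or.inr (Or.inl ⟨hx, hxA⟩)
      _ ≤ μt A + μt (B ∆ A) := measure_union_le _ _
      _ ≤ (ε : ℝ≥0∞) / 2 + (ε : ℝ≥0∞) / 2 := by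
          refine add_le_add ?_ ?_
          · rw [hμtA]; exact (hδ A' hμA).le
          · exact le_trans (le_trans (hρμt _) hAB.le)
              (le_trans (min_le_right _ _) (min_le_right _ _))
      _ = (ε : ℝ≥0∞) := ENNReal.add_halves _
  refine ⟨part1, ?_⟩
  intro herg hergt hne habs
  have h1 : μt ≪ μ := part1 habs
  set g : (ℤ → S) → ℝ≥0∞ := μt.rnDeriv μ with hg
  have hgm : Measurable g := Measure.measurable_rnDeriv _ _
  have hwd : μ.withDensity g = μt := Measure.withDensity_rnDeriv_eq _ _ h1
  have hgint : ∫⁻ x, g x ∂μ = 1 := by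
    have h := congrArg (fun m : Measure (ℤ → S) => m Set.univ) hwd
    simp only [withDensity_apply g MeasurableSet.univ, Measure.restrict_univ, measure_univ] at h
    exact h
  have hcomp : μ.withDensity (g ∘ shiftZ) = μt := by
    ext E hE
    have himg : MeasurableSet (shiftZ '' E) :=
      (shiftE S).measurableEmbedding.measurableSet_image.mpr hE
    rw [withDensity_apply _ hE]
    calc ∫⁻ x in E, (g ∘ shiftZ) x ∂μ = ∫⁻ y in shiftZ '' E, g y ∂μ :=
          hinv.setLIntegral_comp_emb (shiftE S).measurableEmbedding g E
      _ = μt (shiftZ '' E) := by rw [← hwd, withDensity_apply _ himg]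
      _ = μt (shiftZ ⁻¹' (shiftZ '' E)) :=
          (hinvt.measure_preimage himg.nullMeasurableSet).symm
      _ = μt E := by
          have hinj : Function.Injective (shiftZ (S := S)) := (shiftE S).injective
          rw [Set.preimage_image_eq E hinj]
  have heq : g ∘ shiftZ =ᵐ[μ] g := by
    refine (withDensity_eq_iff ((hgm.comp shiftZ_measurable).aemeasurable)
      hgm.aemeasurable ?_).mp (hcomp.trans hwd.symm)
    have : ∫⁻ x, g (shiftZ x) ∂μ = ∫⁻ x, g x ∂μ := hinv.lintegral_comp hgm
    rw [Function.comp_def, this, hgint]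
    exact ENNReal.one_ne_top
  obtain ⟨c, hc⟩ := herg.ae_eq_const_of_ae_eq_comp₀ hgm.nullMeasurable heq
  have hμt_eq : μt = c • μ := by
    have hc' : g =ᵐ[μ] fun _ => c := hc
    rw [← hwd, withDensity_congr_ae hc', withDensity_const]
  have hc1 : c = 1 := by
    have h := congrArg (fun m : Measure (ℤ → S) => m Set.univ) hμt_eq
    simp only [measure_univ, Measure.smul_apply, smul_eq_mul, mul_one] at h
    exact h.symm
  exact hne (show μ = μt by rw [hμt_eq, hc1, one_smul])
end
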